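/- arXiv:1602.04527 — 12 statements merged into one kernel-verified Lean document; each statement's English description precedes it below -/
import Mathlib

section
/- Let H be a complex Hilbert space, A a bounded normal operator on H, and G a nonempty countable set of vectors in H. If the family (A^n g), indexed by pairs (g,n) ∈ G × ℕ, is complete in H, then it is not minimal; that is, there exists a pair (g₀,n₀) ∈ G × ℕ such that A^{n₀} g₀ belongs to the closed linear span of { A^n g : (g,n) ∈ G × ℕ, (g,n) ≠ (g₀,n₀) }. -/
open ContinuousLinearMap
open scoped InnerProductSpace

/-!
The family cannot be minimal at `A g` for any `g ∈ G`. Otherwise some `w` is orthogonal to every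
`A^n g'` except `A g`, so `(A*)² w` is orthogonal to the whole complete family and vanishes. As
`A*` is normal, `ker (A*)² = ker A*`, hence `A* w = 0`, contradicting `⟪w, A g⟫ = ⟪A* w, g⟫ ≠ 0`.
-/

namespace Submodule

variable {𝕜 E : Type*} [RCLike 𝕜] [NormedAddCommGroup E] [InnerProductSpace 𝕜 E]

theorem mem_orthogonal_span_iff {s : Set E} {w : E} :
    w ∈ (span 𝕜 s)ᗮ ↔ ∀ u ∈ s, ⟪u, w⟫_𝕜 = 0 := by
  refine ⟨fun hw u hu => inner_right_of_mem_orthogonal (subset_span hu) hw, fun h => ?_⟩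
  have : span 𝕜 s ≤ (𝕜 ∙ w)ᗮ :=
    span_le.mpr fun u hu => mem_orthogonal_singleton_iff_inner_left.mpr (h u hu)
  exact (mem_orthogonal _ _).mpr fun u hu => mem_orthogonal_singleton_iff_inner_left.mp (this hu)

theorem exists_inner_ne_zero_of_notMem_topologicalClosure_span [CompleteSpace E] {s : Set E}
    {v : E} (hv : v ∉ (span 𝕜 s).topologicalClosure) :
    ∃ w, (∀ u ∈ s, ⟪u, w⟫_𝕜 = 0) ∧ ⟪w, v⟫_𝕜 ≠ 0 := by
  rw [← orthogonal_orthogonal_eq_closure, mem_orthogonal] at hv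
  push Not at hv
  obtain ⟨w, hw, hwv⟩ := hv
  exact ⟨w, mem_orthogonal_span_iff.mp hw, hwv⟩

theorem eq_zero_of_forall_inner_eq_zero_of_topologicalClosure_span_eq_top [CompleteSpace E]
    {s : Set E} (hs : (span 𝕜 s).topologicalClosure = ⊤) {w : E}
    (hw : ∀ u ∈ s, ⟪u, w⟫_𝕜 = 0) : w = 0 := by
  rw [topologicalClosure_eq_top_iff] at hs
  simpa [hs] using mem_orthogonal_span_iff.mpr hw

end Submodule

namespace ContinuousLinearMap

variable {𝕜 E : Type*} [RCLike 𝕜] [NormedAddCommGroup E] [InnerProductSpace 𝕜 E] [CompleteSpace E]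

theorem IsStarNormal.apply_apply_eq_zero_iff {T : E →L[𝕜] E} (hT : IsStarNormal T) (x : E) :
    T (T x) = 0 ↔ T x = 0 := by
  rw [← hT.adjoint_apply_eq_zero_iff (T x)]
  exact SetLike.ext_iff.mp (ker_adjoint_comp_self T) x

theorem inner_pow_apply_adjoint_pow_apply (A : E →L[𝕜] E) (k n : ℕ) (x y : E) :
    ⟪(A ^ n) x, (adjoint A ^ k) y⟫_𝕜 = ⟪(A ^ (n + k)) x, y⟫_𝕜 := by
  rw [← star_eq_adjoint, ← star_pow, star_eq_adjoint, adjoint_inner_right, add_comm, pow_add,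
    mul_apply_eq_comp]

theorem adjoint_pow_apply_eq_zero_of_forall_inner_pow_eq_zero {A : E →L[𝕜] E} {G : Set E}
    (hcomplete :
      (Submodule.span 𝕜 (Set.range fun p : ↥G × ℕ => (A ^ p.2) (p.1 : E))).topologicalClosure = ⊤)
    {k : ℕ} {w : E} (hw : ∀ g ∈ G, ∀ n, ⟪(A ^ (n + k)) g, w⟫_𝕜 = 0) :
    (adjoint A ^ k) w = 0 := by
  refine Submodule.eq_zero_of_forall_inner_eq_zero_of_topologicalClosure_span_eq_top hcomplete ?_
  rintro _ ⟨⟨g, n⟩, rfl⟩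
  rw [inner_pow_apply_adjoint_pow_apply]
  exact hw g g.2 n

end ContinuousLinearMap

theorem stmt_0_general {H : Type*} [NormedAddCommGroup H] [InnerProductSpace ℂ H] [CompleteSpace H]
    (A : H →L[ℂ] H) (hA : adjoint A ∘L A = A ∘L adjoint A)
    (G : Set H) (hGne : G.Nonempty)
    (hcomplete :
      (Submodule.span ℂ
        (Set.range fun p : ↥G × ℕ => (A ^ p.2) (p.1 : H))).topologicalClosure = ⊤) :
    ∃ p₀ : ↥G × ℕ, (A ^ p₀.2) (p₀.1 : H) ∈
      (Submodule.span ℂ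
        ((fun p : ↥G × ℕ => (A ^ p.2) (p.1 : H)) '' {p | p ≠ p₀})).topologicalClosure := by
  obtain ⟨g, hg⟩ := hGne
  refine ⟨(⟨g, hg⟩, 1), ?_⟩
  by_contra hmin
  obtain ⟨w, hw_perp, hw⟩ :=
    Submodule.exists_inner_ne_zero_of_notMem_topologicalClosure_span hmin
  have hA_normal : IsStarNormal (adjoint A) := by
    have : IsStarNormal A := ⟨hA⟩
    rw [← star_eq_adjoint]
    infer_instance
  have h_sq : adjoint A (adjoint A w) = 0 := by
    refine adjoint_pow_apply_eq_zero_of_forall_inner_pow_eq_zero hcomplete (k := 2) ?_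
    intro g' hg' n
    exact hw_perp _ ⟨(⟨g', hg'⟩, n + 2), by simp, rfl⟩
  have h_adj : adjoint A w = 0 := (hA_normal.apply_apply_eq_zero_iff w).mp h_sq
  apply hw
  rw [pow_one, ← adjoint_inner_left, h_adj, inner_zero_left]

/-- If `A` is a bounded normal operator on a complex Hilbert space `H` and `G` is
a nonempty countable set of vectors such that the system `{A^n g : g ∈ G, n ∈ ℕ}` is
complete in `H`, then this system is not minimal. -/
theorem stmt_0 {H : Type*} [NormedAddCommGroup H] [InnerProductSpace ℂ H] [CompleteSpace H]
    (A : H →L[ℂ] H) (hA : adjoint A ∘L A = A ∘L adjoint A)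
    (G : Set H) (hG : G.Countable) (hGne : G.Nonempty)
    (hcomplete :
      (Submodule.span ℂ
        (Set.range fun p : ↥G × ℕ => (A ^ p.2) (p.1 : H))).topologicalClosure = ⊤) :
    ∃ p₀ : ↥G × ℕ, (A ^ p₀.2) (p₀.1 : H) ∈
      (Submodule.span ℂ
        ((fun p : ↥G × ℕ => (A ^ p.2) (p.1 : H)) '' {p | p ≠ p₀})).topologicalClosure :=
  stmt_0_general A hA G hGne hcomplete
end

section
/- Let H be a complex Hilbert space, A a bounded normal operator on H, and G a countable set of vectors in H such that the closed linear span of { A^n g : g ∈ G, n ∈ ℕ } equals H. Then for every m ∈ ℕ, the closed linear span of { g : g ∈ G } ∪ { A^n g : g ∈ G, n ≥ m } also equals H. -/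
open ContinuousLinearMap

local notation "⟪" x ", " y "⟫" => @inner ℂ _ _ x y

private lemma norm_adjoint_apply_eq {H : Type*} [NormedAddCommGroup H]
    [InnerProductSpace ℂ H] [CompleteSpace H]
    (A : H →L[ℂ] H) (hA : adjoint A ∘L A = A ∘L adjoint A) (z : H) :
    ‖A z‖ = ‖adjoint A z‖ := by
  have hz : adjoint A (A z) = A (adjoint A z) := ContinuousLinearMap.ext_iff.mp hA z
  have h1 : (⟪A z, A z⟫ : ℂ) = ⟪adjoint A z, adjoint A z⟫ := by
    rw [← ContinuousLinearMap.adjoint_inner_right A z (A z), hz,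
      ← ContinuousLinearMap.adjoint_inner_left A (adjoint A z) z]
  rw [inner_self_eq_norm_sq_to_K, inner_self_eq_norm_sq_to_K] at h1
  have h2 : ‖A z‖ ^ 2 = ‖adjoint A z‖ ^ 2 := by exact_mod_cast h1
  nlinarith [norm_nonneg (A z), norm_nonneg (adjoint A z)]

/-- For a normal operator, `A*² x = 0` implies `A* x = 0`. -/
private lemma adj_sq_zero {H : Type*} [NormedAddCommGroup H]
    [InnerProductSpace ℂ H] [CompleteSpace H]
    (A : H →L[ℂ] H) (hA : adjoint A ∘L A = A ∘L adjoint A) (x : H)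
    (h : adjoint A (adjoint A x) = 0) : adjoint A x = 0 := by
  have h2 : A (adjoint A x) = 0 := by
    have := norm_adjoint_apply_eq A hA (adjoint A x)
    rw [h, norm_zero] at this
    exact norm_eq_zero.mp this
  have h3 : (⟪adjoint A x, adjoint A x⟫ : ℂ) = 0 := by
    rw [ContinuousLinearMap.adjoint_inner_right A (adjoint A x) x, h2, inner_zero_left]
  exact inner_self_eq_zero.mp h3

private lemma adj_pow_zero {H : Type*} [NormedAddCommGroup H]
    [InnerProductSpace ℂ H] [CompleteSpace H]
    (A : H →L[ℂ] H) (hA : adjoint A ∘L A = A ∘L adjoint A) (x : H) :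
    ∀ k : ℕ, ((adjoint A) ^ (k + 1)) x = 0 → adjoint A x = 0 := by
  intro k
  induction k generalizing x with
  | zero => intro h; simpa using h
  | succ n ih =>
    intro h
    have h' : ((adjoint A) ^ (n + 1)) (adjoint A x) = 0 := by
      rw [← ContinuousLinearMap.comp_apply, ← ContinuousLinearMap.mul_def, ← pow_succ]
      exact h
    exact adj_sq_zero A hA x (ih (adjoint A x) h')

/-- If `A` is a bounded normal operator on a complex Hilbert space `H` and `G` is a
countable set of vectors whose orbit `{A^n g : g ∈ G, n ∈ ℕ}` is complete in `H`, then
for every `m ∈ ℕ` the system `{g : g ∈ G} ∪ {A^n g : g ∈ G, n ≥ m}` is also complete. -/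
theorem stmt_1 {H : Type*} [NormedAddCommGroup H] [InnerProductSpace ℂ H] [CompleteSpace H]
    (A : H →L[ℂ] H) (hA : adjoint A ∘L A = A ∘L adjoint A)
    (G : Set H) (hG : G.Countable)
    (hcomplete :
      (Submodule.span ℂ {x | ∃ g ∈ G, ∃ n : ℕ, x = (A ^ n) g}).topologicalClosure = ⊤) :
    ∀ m : ℕ,
      (Submodule.span ℂ
        (G ∪ {x | ∃ g ∈ G, ∃ n : ℕ, m ≤ n ∧ x = (A ^ n) g})).topologicalClosure = ⊤ := by
  intro m
  rw [Submodule.topologicalClosure_eq_top_iff] at hcomplete ⊢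
  -- key fact: anything orthogonal to the full orbit is zero
  have hfull : ∀ y : H, (∀ g ∈ G, ∀ n : ℕ, ⟪(A ^ n) g, y⟫ = 0) → y = 0 := by
    intro y hy
    have : y ∈ (Submodule.span ℂ {x | ∃ g ∈ G, ∃ n : ℕ, x = (A ^ n) g})ᗮ := by
      rw [Submodule.mem_orthogonal]
      intro u hu
      induction hu using Submodule.span_induction with
      | mem v hv => obtain ⟨g, hg, n, rfl⟩ := hv; exact hy g hg n
      | zero => simp
      | add a b _ _ ha hb => rw [inner_add_left, ha, hb, add_zero]
      | smul c a _ ha => rw [inner_smul_left, ha, mul_zero]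
    rw [hcomplete] at this
    exact this
  rw [Submodule.eq_bot_iff]
  intro x hx
  rw [Submodule.mem_orthogonal] at hx
  have hx' : ∀ v ∈ G ∪ {x | ∃ g ∈ G, ∃ n : ℕ, m ≤ n ∧ x = (A ^ n) g}, ⟪v, x⟫ = 0 := by
    intro v hv
    exact hx v (Submodule.subset_span hv)
  have hGx : ∀ g ∈ G, ⟪g, x⟫ = 0 := fun g hg => hx' g (Or.inl hg)
  have hTail : ∀ g ∈ G, ∀ n : ℕ, m ≤ n → ⟪(A ^ n) g, x⟫ = 0 := fun g hg n hn =>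
    hx' _ (Or.inr ⟨g, hg, n, hn, rfl⟩)
  -- adjoint of A^n
  have hadj : ∀ (n : ℕ) (u v : H), ⟪u, ((adjoint A) ^ n) v⟫ = ⟪(A ^ n) u, v⟫ := by
    intro n u v
    have : (adjoint A) ^ n = adjoint (A ^ n) := by
      rw [← ContinuousLinearMap.star_eq_adjoint, ← ContinuousLinearMap.star_eq_adjoint,
        ← star_pow]
    rw [this, ContinuousLinearMap.adjoint_inner_right]
  -- y := (A*)^m x is orthogonal to the full orbit, hence zero
  have hy : ((adjoint A) ^ m) x = 0 := by
    apply hfull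
    intro g hg n
    rw [hadj m ((A ^ n) g) x, ← ContinuousLinearMap.comp_apply, ← ContinuousLinearMap.mul_def,
      ← pow_add]
    exact hTail g hg (m + n) (Nat.le_add_right m n)
  -- hence A* x = 0 (when m ≥ 1) or x = 0 directly (m = 0)
  rcases Nat.eq_zero_or_pos m with hm | hm
  · subst hm; simpa using hy
  · obtain ⟨k, rfl⟩ := Nat.exists_eq_add_of_lt hm
    have hstar : adjoint A x = 0 := adj_pow_zero A hA x k (by simpa [Nat.add_comm] using hy)
    apply hfull
    intro g hg n
    cases n with
    | zero => simpa using hGx g hg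
    | succ n =>
      have : (⟪(A ^ (n + 1)) g, x⟫ : ℂ) = ⟪(A ^ n) g, adjoint A x⟫ := by
        rw [ContinuousLinearMap.adjoint_inner_right, pow_succ', ContinuousLinearMap.mul_apply]
      rw [this, hstar, inner_zero_right]
end

section
/- Let H be a complex Hilbert space, A a bounded normal reductive operator on H, G a countable set of vectors in H, and L : G → ℕ ∪ {∞} a function satisfying the span condition: the closed linear span of { A^n g : g ∈ G, 0 ≤ n < L(g) } equals the closed linear span of { A^n g : g ∈ G, n ∈ ℕ }. If there exists h ∈ G with L(h) = ∞, then the family (A^n g), indexed by pairs (g,n) with g ∈ G and 0 ≤ n < L(g), is not minimal (in particular, it is not a basis for H). -/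
/-!
Let `h` have `L h = ∞` and let `K` be the closed span of `A h, A² h, …`. It is closed and
`A`-invariant, hence reducing, so `Kᗮ` is `A`-invariant too. Writing `h = v + u` with `v ∈ K`,
`u ∈ Kᗮ`, the vector `A u = A h - A v` lies in `K ∩ Kᗮ = 0`. Thus `A h = A v` lies in the
closed span of `A² h, A³ h, …`, i.e. of other members of the family.
-/

open ContinuousLinearMap Module End Submodule

section

variable {𝕜 E : Type*} [RCLike 𝕜] [NormedAddCommGroup E] [InnerProductSpace 𝕜 E]

def ContinuousLinearMap.IsReductive [CompleteSpace E] (T : E →L[𝕜] E) : Prop :=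
  ∀ V : Submodule 𝕜 E, IsClosed (V : Set E) →
    V ∈ invtSubmodule T.toLinearMap → V ∈ invtSubmodule (adjoint T).toLinearMap

theorem ContinuousLinearMap.apply_starProjection_eq_apply [CompleteSpace E] {T : E →L[𝕜] E}
    {K : Submodule 𝕜 E} [K.HasOrthogonalProjection] (hK : K ∈ invtSubmodule T.toLinearMap)
    (hK' : K ∈ invtSubmodule (adjoint T).toLinearMap) {x : E} (hx : T x ∈ K) :
    T (K.starProjection x) = T x := by
  have h_perp : T (x - K.starProjection x) ∈ Kᗮ :=
    orthogonal_mem_invtSubmodule hK' (K.sub_starProjection_mem_orthogonal x)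
  have h_mem : T (x - K.starProjection x) ∈ K := by
    rw [map_sub]
    exact K.sub_mem hx (hK (K.starProjection_apply_mem x))
  have h_zero := disjoint_def.mp K.orthogonal_disjoint _ h_mem h_perp
  rwa [map_sub, sub_eq_zero, eq_comm] at h_zero

end

section

variable {𝕜 E : Type*} [NontriviallyNormedField 𝕜] [NormedAddCommGroup E] [NormedSpace 𝕜 E]

noncomputable def ContinuousLinearMap.orbitTail (T : E →L[𝕜] E) (x : E) (k : ℕ) :
    Submodule 𝕜 E :=
  (span 𝕜 (Set.range fun n : ℕ => (T ^ (n + k)) x)).topologicalClosure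

namespace ContinuousLinearMap

variable (T : E →L[𝕜] E) (x : E)

theorem isClosed_orbitTail (k : ℕ) : IsClosed (T.orbitTail x k : Set E) :=
  isClosed_topologicalClosure _

theorem pow_apply_mem_orbitTail (k : ℕ) : (T ^ k) x ∈ T.orbitTail x k :=
  le_topologicalClosure _ (subset_span ⟨0, by simp⟩)

theorem orbitTail_succ_le (k : ℕ) : T.orbitTail x (k + 1) ≤ T.orbitTail x k := by
  refine topologicalClosure_mono (span_le.mpr ?_)
  rintro _ ⟨n, rfl⟩
  exact subset_span ⟨n + 1, by simp only [add_right_comm n 1 k, add_assoc]⟩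

theorem apply_mem_orbitTail_succ {k : ℕ} {y : E} (hy : y ∈ T.orbitTail x k) :
    T y ∈ T.orbitTail x (k + 1) := by
  have h_span : (span 𝕜 (Set.range fun n : ℕ => (T ^ (n + k)) x)).map T.toLinearMap ≤
      span 𝕜 (Set.range fun n : ℕ => (T ^ (n + (k + 1))) x) := by
    rw [map_span, span_le, ← Set.range_comp]
    rintro _ ⟨n, rfl⟩
    exact subset_span ⟨n, by simp [← add_assoc, pow_succ']⟩
  exact map_mem_closure T.continuous hy fun z hz => h_span (mem_map_of_mem hz)

theorem orbitTail_mem_invtSubmodule (k : ℕ) : T.orbitTail x k ∈ invtSubmodule T.toLinearMap :=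
  fun _ hy => T.orbitTail_succ_le x k (T.apply_mem_orbitTail_succ x hy)

end ContinuousLinearMap

end

theorem ContinuousLinearMap.IsReductive.apply_mem_orbitTail_two {𝕜 E : Type*} [RCLike 𝕜]
    [NormedAddCommGroup E] [InnerProductSpace 𝕜 E] [CompleteSpace E] {T : E →L[𝕜] E}
    (hT : T.IsReductive) (x : E) : T x ∈ T.orbitTail x 2 := by
  set K := T.orbitTail x 1
  have : CompleteSpace K := (T.isClosed_orbitTail x 1).completeSpace_coe
  have hK := T.orbitTail_mem_invtSubmodule x 1
  have hTx : T x ∈ K := by simpa using T.pow_apply_mem_orbitTail x 1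
  rw [← apply_starProjection_eq_apply hK (hT K (T.isClosed_orbitTail x 1) hK) hTx]
  exact T.apply_mem_orbitTail_succ x (K.starProjection_apply_mem x)

theorem stmt_3_general {H : Type*} [NormedAddCommGroup H] [InnerProductSpace ℂ H] [CompleteSpace H]
    (A : H →L[ℂ] H)
    (hred : ∀ V : Submodule ℂ H, IsClosed (V : Set H) →
      (∀ v ∈ V, A v ∈ V) → ∀ v ∈ V, adjoint A v ∈ V)
    (G : Set H) (L : ↥G → ℕ∞)
    (hinf : ∃ h : ↥G, L h = ⊤) :
    ∃ q₀ : {p : ↥G × ℕ // (p.2 : ℕ∞) < L p.1},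
      (A ^ q₀.1.2) (q₀.1.1 : H) ∈
        (Submodule.span ℂ
          ((fun q : {p : ↥G × ℕ // (p.2 : ℕ∞) < L p.1} => (A ^ q.1.2) (q.1.1 : H)) ''
            {q | q ≠ q₀})).topologicalClosure := by
  obtain ⟨h, hh⟩ := hinf
  have hA : A.IsReductive := hred
  have hlt (n : ℕ) : (n : ℕ∞) < L h := hh ▸ ENat.natCast_lt_top n
  refine ⟨⟨(h, 1), hlt 1⟩, ?_⟩
  rw [pow_one]
  refine topologicalClosure_mono (span_le.mpr ?_) (hA.apply_mem_orbitTail_two (h : H))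
  rintro _ ⟨n, rfl⟩
  exact subset_span ⟨⟨(h, n + 2), hlt _⟩, fun heq => by simpa using congrArg (·.1.2) heq, rfl⟩

/-- Let `A` be a bounded reductive normal operator on a complex Hilbert space `H`, `G` a
countable set of vectors, and `L : G → ℕ ∪ {∞}` satisfying the span condition. If some
`h ∈ G` has `L h = ∞`, then the system `{A^n g : g ∈ G, 0 ≤ n < L g}` is not minimal. -/
theorem stmt_3 {H : Type*} [NormedAddCommGroup H] [InnerProductSpace ℂ H] [CompleteSpace H]
    (A : H →L[ℂ] H) (hA : adjoint A ∘L A = A ∘L adjoint A)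
    (hred : ∀ V : Submodule ℂ H, IsClosed (V : Set H) →
      (∀ v ∈ V, A v ∈ V) → ∀ v ∈ V, adjoint A v ∈ V)
    (G : Set H) (hG : G.Countable) (L : ↥G → ℕ∞)
    (hspan :
      (Submodule.span ℂ
        {x | ∃ g : ↥G, ∃ n : ℕ, (n : ℕ∞) < L g ∧ x = (A ^ n) (g : H)}).topologicalClosure =
      (Submodule.span ℂ
        {x | ∃ g : ↥G, ∃ n : ℕ, x = (A ^ n) (g : H)}).topologicalClosure)
    (hinf : ∃ h : ↥G, L h = ⊤) :
    ∃ q₀ : {p : ↥G × ℕ // (p.2 : ℕ∞) < L p.1},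
      (A ^ q₀.1.2) (q₀.1.1 : H) ∈
        (Submodule.span ℂ
          ((fun q : {p : ↥G × ℕ // (p.2 : ℕ∞) < L p.1} => (A ^ q.1.2) (q.1.1 : H)) ''
            {q | q ≠ q₀})).topologicalClosure :=
  stmt_3_general A hred G L hinf
end

section
/- Let H be a complex Hilbert space, A a bounded normal operator on H, and G a countable set of vectors in H such that the family (A^n g), indexed by (g,n) ∈ G × ℕ, is complete in H, and such that for every g ∈ G the family (A^n g)_{n∈ℕ} is Bessel in H. Then the spectrum of A is contained in the closed unit disk { z ∈ ℂ : |z| ≤ 1 }; equivalently, since A is normal, ‖A‖ ≤ 1. -/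
open ContinuousLinearMap
open scoped InnerProductSpace ENNReal

/-!
A Bessel orbit `(A^n g)` is bounded. If `A` had a spectral value `λ` with `|λ| > 1`, pick
`1 < s < |λ|` and a continuous `φ` vanishing on `|z| < s` with `φ λ ≠ 0`. For normal `A` the
functional calculus gives `s^N ‖φ(A) g‖ ≤ ‖A^N φ(A) g‖ = ‖φ(A) A^N g‖`, which stays bounded, so
`φ(A)` kills every `g ∈ G`; as it commutes with `A` it kills the dense span of the orbits, so
`φ(A) = 0`, contradicting `φ λ ≠ 0`. Finally `‖A‖` is the spectral radius of the normal `A`.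
-/

lemma norm_sq_le_of_bessel {𝕜 E ι : Type*} [RCLike 𝕜] [NormedAddCommGroup E]
    [InnerProductSpace 𝕜 E] {v : ι → E} {β : ℝ} (hβ : 0 ≤ β)
    (hv : ∀ f : E, ∑' i, (‖⟪f, v i⟫_𝕜‖₊ : ℝ≥0∞) ^ 2 ≤ ENNReal.ofReal (β * ‖f‖ ^ 2)) (i : ι) :
    ‖v i‖ ^ 2 ≤ β := by
  have h := (ENNReal.le_tsum i).trans (hv (v i))
  rw [← enorm_eq_nnnorm, inner_self_eq_norm_sq_to_K, ← ofReal_norm, norm_pow, RCLike.norm_ofReal,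
    abs_norm, ← ENNReal.ofReal_pow (by positivity),
    ENNReal.ofReal_le_ofReal_iff (by positivity)] at h
  nlinarith [sq_nonneg (‖v i‖ ^ 2 - β)]

lemma ContinuousLinearMap.eq_zero_of_commute_of_forall_apply_eq_zero
    {𝕜 E : Type*} [NontriviallyNormedField 𝕜] [NormedAddCommGroup E] [NormedSpace 𝕜 E]
    {A C : E →L[𝕜] E} (hCA : Commute C A) {G : Set E} (hCG : ∀ g ∈ G, C g = 0)
    (hdense : (Submodule.span 𝕜
      (Set.range fun p : G × ℕ => (A ^ p.2) (p.1 : E))).topologicalClosure = ⊤) :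
    C = 0 := by
  have hspan : Submodule.span 𝕜 (Set.range fun p : G × ℕ => (A ^ p.2) (p.1 : E))
      ≤ LinearMap.ker (C : E →ₗ[𝕜] E) := by
    rw [Submodule.span_le]
    rintro _ ⟨⟨⟨g, hg⟩, n⟩, rfl⟩
    change (C * A ^ n) g = 0
    rw [(hCA.pow_right n).eq, mul_apply_eq_comp, hCG g hg, map_zero]
  have hker := Submodule.topologicalClosure_minimal _ hspan C.isClosed_ker
  rw [hdense, top_le_iff] at hker
  exact ext fun x => LinearMap.mem_ker.mp (hker ▸ Submodule.mem_top)

section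

variable {H : Type*} [NormedAddCommGroup H] [InnerProductSpace ℂ H] [CompleteSpace H]

open scoped ComplexOrder in
lemma norm_cfc_apply_le_of_norm_le {A : H →L[ℂ] H} {f g : ℂ → ℂ} (x : H)
    (h : ∀ z ∈ spectrum ℂ A, ‖f z‖ ≤ ‖g z‖)
    (hf : ContinuousOn f (spectrum ℂ A) := by cfc_cont_tac)
    (hg : ContinuousOn g (spectrum ℂ A) := by cfc_cont_tac) :
    ‖cfc f A x‖ ≤ ‖cfc g A x‖ := by
  have hle : star (cfc f A) * cfc f A ≤ star (cfc g A) * cfc g A := by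
    rw [← cfc_star, ← cfc_mul .., ← cfc_star, ← cfc_mul ..]
    refine cfc_mono fun z hz => ?_
    simp only [RCLike.star_def, RCLike.conj_mul]
    exact_mod_cast pow_le_pow_left₀ (norm_nonneg _) (h z hz) 2
  have hpos := ((le_def _ _).mp hle).re_inner_nonneg_left x
  rw [sub_apply, inner_sub_left, map_sub, star_eq_adjoint, star_eq_adjoint] at hpos
  rw [← sq_le_sq₀ (norm_nonneg _) (norm_nonneg _), apply_norm_sq_eq_inner_adjoint_left,
    apply_norm_sq_eq_inner_adjoint_left]
  exact sub_nonneg.mp hpos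

lemma cfc_apply_eq_zero_of_bounded_orbit {A : H →L[ℂ] H} [IsStarNormal A] {φ : ℂ → ℂ} {s M : ℝ}
    {g : H} (hg : ∀ n : ℕ, ‖(A ^ n) g‖ ≤ M) (hs : 1 < s)
    (hφ : ∀ z ∈ spectrum ℂ A, ‖z‖ < s → φ z = 0)
    (hφc : ContinuousOn φ (spectrum ℂ A) := by cfc_cont_tac) :
    cfc φ A g = 0 := by
  have key (N : ℕ) : s ^ N * ‖cfc φ A g‖ ≤ ‖cfc φ A‖ * M := calc
    s ^ N * ‖cfc φ A g‖ = ‖cfc (fun z => (s : ℂ) ^ N * φ z) A g‖ := by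
      rw [cfc_const_mul .., smul_apply, norm_smul, norm_pow, Complex.norm_real,
        Real.norm_of_nonneg (by linarith)]
    _ ≤ ‖cfc (fun z => φ z * z ^ N) A g‖ := by
      refine norm_cfc_apply_le_of_norm_le g fun z hz => ?_
      rcases lt_or_ge ‖z‖ s with hzs | hzs
      · simp [hφ z hz hzs]
      · rw [norm_mul, norm_mul, mul_comm, norm_pow, norm_pow, Complex.norm_real,
          Real.norm_of_nonneg (by linarith)]
        gcongr
    _ = ‖cfc φ A ((A ^ N) g)‖ := by
      rw [cfc_mul .., cfc_pow_id .., mul_apply_eq_comp]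
    _ ≤ ‖cfc φ A‖ * M := (cfc φ A).le_opNorm_of_le (hg N)
  by_contra hne
  have hpos : 0 < ‖cfc φ A g‖ := norm_pos_iff.mpr hne
  obtain ⟨N, hN⟩ := pow_unbounded_of_one_lt (‖cfc φ A‖ * M / ‖cfc φ A g‖) hs
  rw [div_lt_iff₀ hpos] at hN
  linarith [key N]

lemma norm_le_one_of_mem_spectrum_of_bounded_orbits {A : H →L[ℂ] H} [IsStarNormal A] {G : Set H}
    (hdense : (Submodule.span ℂ
      (Set.range fun p : G × ℕ => (A ^ p.2) (p.1 : H))).topologicalClosure = ⊤)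
    (horbit : ∀ g ∈ G, ∃ M, ∀ n : ℕ, ‖(A ^ n) g‖ ≤ M) {z : ℂ} (hz : z ∈ spectrum ℂ A) :
    ‖z‖ ≤ 1 := by
  by_contra! hz1
  set s := (1 + ‖z‖) / 2 with hs
  set φ : ℂ → ℂ := fun w => ((max (‖w‖ - s) 0 : ℝ) : ℂ)
  have hφ : ∀ w ∈ spectrum ℂ A, ‖w‖ < s → φ w = 0 := fun w _ hw => by
    simp [φ, max_eq_right (sub_nonpos.mpr hw.le)]
  have hC : cfc φ A = 0 := by
    refine eq_zero_of_commute_of_forall_apply_eq_zero ?_ (fun g hg => ?_) hdense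
    · exact (Commute.refl A).cfc IsStarNormal.star_comm_self φ
    · obtain ⟨M, hM⟩ := horbit g hg
      exact cfc_apply_eq_zero_of_bounded_orbit hM (by linarith) hφ
  have hφz : φ z ≠ 0 := by
    simp only [φ, ne_eq, Complex.ofReal_eq_zero, sup_eq_right, sub_nonpos, not_le]
    linarith
  rw [← cfc_zero ℂ A, cfc_eq_cfc_iff_eqOn] at hC
  exact hφz (hC hz)

end

theorem stmt_5_general {H : Type*} [NormedAddCommGroup H] [InnerProductSpace ℂ H] [CompleteSpace H]
    (A : H →L[ℂ] H) (hA : adjoint A ∘L A = A ∘L adjoint A)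
    (G : Set H)
    (hcomplete :
      (Submodule.span ℂ
        (Set.range fun p : ↥G × ℕ => (A ^ p.2) (p.1 : H))).topologicalClosure = ⊤)
    (hBessel : ∀ g ∈ G, ∃ β : ℝ, 0 < β ∧ ∀ f : H,
      (∑' n : ℕ, (‖⟪f, (A ^ n) g⟫_ℂ‖₊ : ℝ≥0∞) ^ 2) ≤ ENNReal.ofReal (β * ‖f‖ ^ 2)) :
    spectrum ℂ A ⊆ {z : ℂ | ‖z‖ ≤ 1} ∧ ‖A‖ ≤ 1 := by
  have : IsStarNormal A := ⟨by rw [star_eq_adjoint]; exact hA⟩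
  have hσ : spectrum ℂ A ⊆ {z : ℂ | ‖z‖ ≤ 1} := by
    refine fun z hz => norm_le_one_of_mem_spectrum_of_bounded_orbits hcomplete (fun g hg => ?_) hz
    obtain ⟨β, hβ, hB⟩ := hBessel g hg
    exact ⟨√β, fun n => Real.le_sqrt_of_sq_le (norm_sq_le_of_bessel hβ.le hB n)⟩
  refine ⟨hσ, ?_⟩
  have hρ : spectralRadius ℂ A ≤ 1 := iSup₂_le fun z hz => by exact_mod_cast hσ hz
  rw [IsStarNormal.spectralRadius_eq_nnnorm] at hρ
  exact_mod_cast hρ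

/-- If `A` is a bounded normal operator on a complex Hilbert space `H`, `G` is a countable
set of vectors such that `{A^n g : g ∈ G, n ∈ ℕ}` is complete in `H`, and for every `g ∈ G`
the system `(A^n g)_{n∈ℕ}` is Bessel, then `σ(A) ⊆ {|z| ≤ 1}`, equivalently `‖A‖ ≤ 1`. -/
theorem stmt_5 {H : Type*} [NormedAddCommGroup H] [InnerProductSpace ℂ H] [CompleteSpace H]
    (A : H →L[ℂ] H) (hA : adjoint A ∘L A = A ∘L adjoint A)
    (G : Set H) (hG : G.Countable)
    (hcomplete :
      (Submodule.span ℂ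
        (Set.range fun p : ↥G × ℕ => (A ^ p.2) (p.1 : H))).topologicalClosure = ⊤)
    (hBessel : ∀ g ∈ G, ∃ β : ℝ, 0 < β ∧ ∀ f : H,
      (∑' n : ℕ, (‖⟪f, (A ^ n) g⟫_ℂ‖₊ : ℝ≥0∞) ^ 2) ≤ ENNReal.ofReal (β * ‖f‖ ^ 2)) :
    spectrum ℂ A ⊆ {z : ℂ | ‖z‖ ≤ 1} ∧ ‖A‖ ≤ 1 :=
  stmt_5_general A hA G hcomplete hBessel
end

section
/- Let H be a complex Hilbert space, A a bounded normal operator on H, and G a countable set of vectors in H such that the family (A^n g), indexed by (g,n) ∈ G × ℕ, is a frame for H. Then ‖A‖ ≤ 1 and ‖A f‖ < ‖f‖ for every nonzero f ∈ H. -/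
open ContinuousLinearMap
open scoped InnerProductSpace ENNReal

/-!
Since `⟪(A*)^m f, Aⁿ g⟫ = ⟪f, A^(n+m) g⟫`, the frame sum of `(A*)^m f` is the tail `n ≥ m` of the
frame sum of `f`. The frame bounds therefore bound all powers of `A*`, hence of `A`, uniformly;
for a normal operator `‖A^(2^k)‖ = ‖A‖^(2^k)`, which forces `‖A‖ ≤ 1`. If moreover `‖A f‖ = ‖f‖`
for some `f ≠ 0`, then `A* A f = f` and normality make `A*` norm-preserving along the whole
`A*`-orbit of `f`, so every tail of the finite frame sum of `f` is at least `α ‖f‖²`: absurd.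
-/

section CStarRing

variable {R : Type*} [NormedRing R] [StarRing R] [CStarRing R]

theorem IsStarNormal.norm_pow_two_pow (a : R) [IsStarNormal a] (k : ℕ) :
    ‖a ^ 2 ^ k‖ = ‖a‖ ^ 2 ^ k := by
  have h : ‖a ^ 2 ^ k‖ ^ 2 = (‖a‖ ^ 2 ^ k) ^ 2 :=
    calc ‖a ^ 2 ^ k‖ ^ 2 = ‖star (a ^ 2 ^ k) * a ^ 2 ^ k‖ := by
          rw [CStarRing.norm_star_mul_self, sq]
      _ = ‖(star a * a) ^ 2 ^ k‖ := by rw [star_pow, (star_comm_self (x := a)).mul_pow]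
      _ = ‖star a * a‖ ^ 2 ^ k := (IsSelfAdjoint.star_mul_self a).norm_pow_two_pow k
      _ = (‖a‖ ^ 2 ^ k) ^ 2 := by rw [CStarRing.norm_star_mul_self, ← sq, ← pow_mul, ← pow_mul,
          mul_comm]
  exact (pow_left_inj₀ (norm_nonneg _) (by positivity) two_ne_zero).mp h

theorem IsStarNormal.norm_le_one_of_norm_pow_le {a : R} [IsStarNormal a] {C : ℝ}
    (h : ∀ n, ‖a ^ n‖ ≤ C) : ‖a‖ ≤ 1 := by
  by_contra! ha
  obtain ⟨n, hn⟩ := pow_unbounded_of_one_lt C ha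
  have : ‖a‖ ^ n ≤ ‖a‖ ^ 2 ^ n := pow_le_pow_right₀ ha.le Nat.lt_two_pow_self.le
  linarith [h (2 ^ n), IsStarNormal.norm_pow_two_pow a n]

end CStarRing

namespace ContinuousLinearMap

variable {𝕜 E : Type*} [RCLike 𝕜] [NormedAddCommGroup E] [InnerProductSpace 𝕜 E] [CompleteSpace E]

theorem adjoint_pow (T : E →L[𝕜] E) (n : ℕ) : adjoint (T ^ n) = adjoint T ^ n := by
  simpa only [star_eq_adjoint] using star_pow T n

theorem adjoint_apply_apply_eq_self {T : E →L[𝕜] E} (hT : ‖T‖ ≤ 1) {x : E} (hx : ‖T x‖ = ‖x‖) :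
    adjoint T (T x) = x := by
  have hre : RCLike.re ⟪adjoint T (T x), x⟫_𝕜 = ‖x‖ ^ 2 := by
    rw [adjoint_inner_left, inner_self_eq_norm_sq, hx]
  have hle : ‖adjoint T (T x)‖ ≤ ‖x‖ :=
    calc ‖adjoint T (T x)‖ ≤ ‖adjoint T‖ * ‖T x‖ := le_opNorm _ _
      _ = ‖T‖ * ‖x‖ := by rw [adjoint.norm_map, hx]
      _ ≤ ‖x‖ := mul_le_of_le_one_left (norm_nonneg x) hT
  have hsq : ‖adjoint T (T x) - x‖ ^ 2 ≤ 0 := by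
    rw [norm_sub_sq (𝕜 := 𝕜), hre]
    nlinarith [norm_nonneg (adjoint T (T x))]
  simpa [sub_eq_zero] using le_antisymm hsq (sq_nonneg _)

theorem IsStarNormal.norm_adjoint_pow_apply {T : E →L[𝕜] E} (hT : IsStarNormal T) (hT1 : ‖T‖ ≤ 1)
    {x : E} (hx : ‖T x‖ = ‖x‖) (m : ℕ) : ‖(adjoint T ^ m) x‖ = ‖x‖ := by
  induction m generalizing x with
  | zero => simp
  | succ m ih =>
    have hadj : ‖adjoint T x‖ = ‖x‖ := (isStarNormal_iff_norm_eq_adjoint.mp hT x).symm.trans hx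
    have hfix : T (adjoint T x) = x :=
      (DFunLike.congr_fun hT.star_comm_self x).symm.trans (adjoint_apply_apply_eq_self hT1 hx)
    rw [pow_succ, mul_apply_eq_comp, ih (by rw [hfix, hadj]), hadj]

end ContinuousLinearMap

section OrbitFrame

variable {𝕜 E : Type*} [RCLike 𝕜] [NormedAddCommGroup E] [InnerProductSpace 𝕜 E]
  (A : E →L[𝕜] E) (G : Set E)

noncomputable def orbitEnergy (f : E) (n : ℕ) : ℝ≥0∞ :=
  ∑' g : G, (‖⟪f, (A ^ n) g⟫_𝕜‖₊ : ℝ≥0∞) ^ 2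

theorem tsum_prod_eq_tsum_orbitEnergy (f : E) :
    ∑' p : G × ℕ, (‖⟪f, (A ^ p.2) (p.1 : E)⟫_𝕜‖₊ : ℝ≥0∞) ^ 2 = ∑' n, orbitEnergy A G f n := by
  rw [ENNReal.tsum_prod (f := fun (g : G) n => (‖⟪f, (A ^ n) (g : E)⟫_𝕜‖₊ : ℝ≥0∞) ^ 2),
    ENNReal.tsum_comm]
  rfl

variable [CompleteSpace E]

theorem orbitEnergy_adjoint_pow_apply (f : E) (m n : ℕ) :
    orbitEnergy A G ((adjoint A ^ m) f) n = orbitEnergy A G f (n + m) := by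
  refine tsum_congr fun g => ?_
  rw [← adjoint_pow, adjoint_inner_left, ← mul_apply_eq_comp, ← pow_add, add_comm]

variable {A G} {α β : ℝ}

theorem ofReal_le_tsum_orbitEnergy_add
    (hlower : ∀ f, ENNReal.ofReal (α * ‖f‖ ^ 2) ≤ ∑' n, orbitEnergy A G f n) (f : E) (m : ℕ) :
    ENNReal.ofReal (α * ‖(adjoint A ^ m) f‖ ^ 2) ≤ ∑' n, orbitEnergy A G f (n + m) := by
  simpa only [orbitEnergy_adjoint_pow_apply] using hlower ((adjoint A ^ m) f)

theorem norm_pow_le_sqrt_of_frame (hα : 0 < α) (hβ : 0 ≤ β)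
    (hlower : ∀ f, ENNReal.ofReal (α * ‖f‖ ^ 2) ≤ ∑' n, orbitEnergy A G f n)
    (hupper : ∀ f, ∑' n, orbitEnergy A G f n ≤ ENNReal.ofReal (β * ‖f‖ ^ 2)) (m : ℕ) :
    ‖A ^ m‖ ≤ √(β / α) := by
  rw [← adjoint.norm_map, adjoint_pow]
  refine opNorm_le_bound _ (Real.sqrt_nonneg _) fun f => ?_
  have h : α * ‖(adjoint A ^ m) f‖ ^ 2 ≤ β * ‖f‖ ^ 2 := by
    rw [← ENNReal.ofReal_le_ofReal_iff (by positivity)]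
    calc ENNReal.ofReal (α * ‖(adjoint A ^ m) f‖ ^ 2)
        ≤ ∑' n, orbitEnergy A G f (n + m) := ofReal_le_tsum_orbitEnergy_add hlower f m
      _ ≤ ∑' n, orbitEnergy A G f n :=
          ENNReal.tsum_comp_le_tsum_of_injective (add_left_injective m) _
      _ ≤ ENNReal.ofReal (β * ‖f‖ ^ 2) := hupper f
  rw [← Real.sqrt_sq (norm_nonneg f), ← Real.sqrt_mul' _ (sq_nonneg _),
    Real.le_sqrt (norm_nonneg _) (by positivity), div_mul_eq_mul_div, le_div_iff₀ hα]
  linarith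

end OrbitFrame

theorem stmt_6_general {H : Type*} [NormedAddCommGroup H] [InnerProductSpace ℂ H] [CompleteSpace H]
    (A : H →L[ℂ] H) (hA : adjoint A ∘L A = A ∘L adjoint A)
    (G : Set H)
    (hframe : ∃ α β : ℝ, 0 < α ∧ α ≤ β ∧ ∀ f : H,
      ENNReal.ofReal (α * ‖f‖ ^ 2) ≤
        (∑' p : ↥G × ℕ, (‖⟪f, (A ^ p.2) (p.1 : H)⟫_ℂ‖₊ : ℝ≥0∞) ^ 2) ∧
      (∑' p : ↥G × ℕ, (‖⟪f, (A ^ p.2) (p.1 : H)⟫_ℂ‖₊ : ℝ≥0∞) ^ 2) ≤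
        ENNReal.ofReal (β * ‖f‖ ^ 2)) :
    ‖A‖ ≤ 1 ∧ ∀ f : H, f ≠ 0 → ‖A f‖ < ‖f‖ := by
  obtain ⟨α, β, hα, hαβ, hframe⟩ := hframe
  simp only [tsum_prod_eq_tsum_orbitEnergy] at hframe
  have hlower f := (hframe f).1
  have hupper f := (hframe f).2
  have hnormal : IsStarNormal A := ⟨hA⟩
  have hA1 : ‖A‖ ≤ 1 := IsStarNormal.norm_le_one_of_norm_pow_le
    (norm_pow_le_sqrt_of_frame hα (hα.le.trans hαβ) hlower hupper)
  refine ⟨hA1, fun f hf => ((A.le_of_opNorm_le hA1 f).trans_eq (one_mul _)).lt_of_ne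
    fun hAf => ?_⟩
  have htail := ENNReal.tendsto_sum_nat_add (orbitEnergy A G f)
    (ne_top_of_le_ne_top ENNReal.ofReal_ne_top (hupper f))
  have hle : ENNReal.ofReal (α * ‖f‖ ^ 2) ≤ 0 := ge_of_tendsto' htail fun m => by
    simpa only [hnormal.norm_adjoint_pow_apply hA1 hAf] using
      ofReal_le_tsum_orbitEnergy_add hlower f m
  have hpos : 0 < α * ‖f‖ ^ 2 := by positivity
  exact (ENNReal.ofReal_pos.mpr hpos).not_ge hle

/-- If `A` is a bounded normal operator on a complex Hilbert space `H` and `G` is a countable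
set of vectors such that `{A^n g : g ∈ G, n ∈ ℕ}` is a frame for `H`, then `‖A‖ ≤ 1` and
`‖A f‖ < ‖f‖` for every nonzero `f`. -/
theorem stmt_6 {H : Type*} [NormedAddCommGroup H] [InnerProductSpace ℂ H] [CompleteSpace H]
    (A : H →L[ℂ] H) (hA : adjoint A ∘L A = A ∘L adjoint A)
    (G : Set H) (hG : G.Countable)
    (hframe : ∃ α β : ℝ, 0 < α ∧ α ≤ β ∧ ∀ f : H,
      ENNReal.ofReal (α * ‖f‖ ^ 2) ≤
        (∑' p : ↥G × ℕ, (‖⟪f, (A ^ p.2) (p.1 : H)⟫_ℂ‖₊ : ℝ≥0∞) ^ 2) ∧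
      (∑' p : ↥G × ℕ, (‖⟪f, (A ^ p.2) (p.1 : H)⟫_ℂ‖₊ : ℝ≥0∞) ^ 2) ≤
        ENNReal.ofReal (β * ‖f‖ ^ 2)) :
    ‖A‖ ≤ 1 ∧ ∀ f : H, f ≠ 0 → ‖A f‖ < ‖f‖ :=
  stmt_6_general A hA G hframe
end

section
/- Let H be a separable complex Hilbert space and A a bounded normal operator on H with ‖A‖ ≤ 1 and ‖A f‖ < ‖f‖ for every nonzero f ∈ H. Then there exists a countable set G ⊆ H such that the family (A^n g), indexed by (g,n) ∈ G × ℕ, is a Parseval frame for H, i.e. Σ_{g∈G} Σ_{n≥0} |⟨f, A^n g⟩|² = ‖f‖² for all f ∈ H. -/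
/-!
Let `D = (1 - A A⋆)^{1/2}` and `G = D O` for a Hilbert basis `O` of `H`. Since
`‖D y‖² = ‖y‖² - ‖A⋆ y‖²`, Parseval's identity for `O` turns `∑ₙ ∑_{g ∈ G} |⟪f, Aⁿ g⟫|²` into the
telescoping sum `∑ₙ ‖D (A⋆)ⁿ f‖² = ‖f‖² - lim ‖(A⋆)ⁿ f‖²`. The limit vanishes because `A⋆` is a
normal strict contraction: `‖(A⋆)ⁿ f‖² = re ⟪f, (A A⋆)ⁿ f⟫` decreases, which makes `(A A⋆)ⁿ f` a
Cauchy sequence, and its limit is a fixed vector of `A A⋆`, hence `0`. Separability makes `O`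
countable, and `D` is injective, so `G × ℕ` is indexed by `O × ℕ`.
-/

open ContinuousLinearMap Filter Topology RCLike
open scoped InnerProductSpace ENNReal

section Parseval

variable {ι 𝕜 E F : Type*} [RCLike 𝕜] [NormedAddCommGroup E] [InnerProductSpace 𝕜 E]

lemma Orthonormal.countable [TopologicalSpace.SeparableSpace E] {v : ι → E}
    (hv : Orthonormal 𝕜 v) : Countable ι := by
  refine Pairwise.countable_of_isOpen_disjoint (s := fun i => Metric.ball (v i) (1 / 2))
    (fun i j hij => Metric.ball_disjoint_ball ?_) (fun _ => Metric.isOpen_ball)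
    (fun _ => Metric.nonempty_ball.mpr one_half_pos)
  have hdist : dist (v i) (v j) ^ 2 = 2 := by
    rw [dist_eq_norm, @norm_sub_sq 𝕜, hv.1 i, hv.1 j, hv.2 hij]
    norm_num
  nlinarith [dist_nonneg (x := v i) (y := v j)]

lemma HilbertBasis.hasSum_norm_inner_sq (b : HilbertBasis ι 𝕜 E) (x : E) :
    HasSum (fun i => ‖⟪b i, x⟫_𝕜‖ ^ 2) (‖x‖ ^ 2) := by
  simpa [b.repr_apply_apply] using lp.hasSum_norm (p := 2) (by norm_num) (b.repr x)

lemma tsum_coe_nnnorm_sq_eq_of_hasSum [NormedAddCommGroup F] {c : ι → F} {x : E}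
    (h : HasSum (fun i => ‖c i‖ ^ 2) (‖x‖ ^ 2)) :
    ∑' i, (‖c i‖₊ : ℝ≥0∞) ^ 2 = (‖x‖₊ : ℝ≥0∞) ^ 2 := by
  have h' : HasSum (fun i => ‖c i‖₊ ^ 2) (‖x‖₊ ^ 2) := by
    rw [← NNReal.hasSum_coe]; simpa only [NNReal.coe_pow, coe_nnnorm] using h
  exact_mod_cast (ENNReal.hasSum_coe.mpr h').tsum_eq

end Parseval

section Powers

variable {𝕜 E : Type*} [RCLike 𝕜] [NormedAddCommGroup E] [InnerProductSpace 𝕜 E]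

lemma norm_apply_le_of_norm_apply_lt {B : E →L[𝕜] E}
    (hstrict : ∀ x, x ≠ 0 → ‖B x‖ < ‖x‖) (x : E) : ‖B x‖ ≤ ‖x‖ := by
  rcases eq_or_ne x 0 with rfl | hx
  · simp
  · exact (hstrict x hx).le

variable [CompleteSpace E]

lemma IsSelfAdjoint.inner_pow_apply_pow_apply {T : E →L[𝕜] E} (hT : IsSelfAdjoint T)
    (x : E) (m n : ℕ) : ⟪(T ^ m) x, (T ^ n) x⟫_𝕜 = ⟪x, (T ^ (m + n)) x⟫_𝕜 := by
  rw [← adjoint_inner_right, (hT.pow m).adjoint_eq, pow_add]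
  rfl

lemma IsSelfAdjoint.cauchySeq_pow_apply {T : E →L[𝕜] E} (hT : IsSelfAdjoint T) {x : E} {L : ℝ}
    (h : Tendsto (fun n => re ⟪x, (T ^ n) x⟫_𝕜) atTop (𝓝 L)) :
    CauchySeq fun n => (T ^ n) x := by
  set a := fun n => re ⟪x, (T ^ n) x⟫_𝕜
  have hdist : ∀ m n : ℕ, dist ((T ^ m) x) ((T ^ n) x) ^ 2
      = a (m + m) - 2 * a (m + n) + a (n + n) := fun m n => by
    rw [dist_eq_norm, @norm_sub_sq 𝕜, ← inner_self_eq_norm_sq (𝕜 := 𝕜),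
      ← inner_self_eq_norm_sq (𝕜 := 𝕜), hT.inner_pow_apply_pow_apply,
      hT.inner_pow_apply_pow_apply, hT.inner_pow_apply_pow_apply]
  have hlim : ∀ u v : ℕ × ℕ → ℕ, Tendsto u atTop atTop → Tendsto v atTop atTop →
      Tendsto (fun p => a (u p + v p)) atTop (𝓝 L) := fun u v hu hv =>
    h.comp (hu.atTop_add_atTop hv)
  have hfst : Tendsto (Prod.fst : ℕ × ℕ → ℕ) atTop atTop := by
    rw [← prod_atTop_atTop_eq]; exact tendsto_fst
  have hsnd : Tendsto (Prod.snd : ℕ × ℕ → ℕ) atTop atTop := by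
    rw [← prod_atTop_atTop_eq]; exact tendsto_snd
  have hsq : Tendsto (fun p : ℕ × ℕ => dist ((T ^ p.1) x) ((T ^ p.2) x) ^ 2) atTop (𝓝 0) := by
    simp only [hdist]
    convert ((hlim _ _ hfst hfst).sub ((hlim _ _ hfst hsnd).const_mul 2)).add
      (hlim _ _ hsnd hsnd) using 2
    ring
  rw [cauchySeq_iff_tendsto_dist_atTop_0]
  simpa [Real.sqrt_sq dist_nonneg] using hsq.sqrt

lemma norm_pow_apply_sq_eq_re_inner {B : E →L[𝕜] E} [IsStarNormal B] (x : E) (n : ℕ) :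
    ‖(B ^ n) x‖ ^ 2 = re ⟪x, ((star B * B) ^ n) x⟫_𝕜 := by
  rw [(IsStarNormal.star_comm_self (x := B)).mul_pow, ← star_pow, star_eq_adjoint,
    apply_norm_sq_eq_inner_adjoint_right]
  rfl

theorem tendsto_pow_apply_zero_of_isStarNormal {B : E →L[𝕜] E} [IsStarNormal B]
    (hstrict : ∀ x, x ≠ 0 → ‖B x‖ < ‖x‖) (x : E) : Tendsto (fun n => (B ^ n) x) atTop (𝓝 0) := by
  have hT : IsSelfAdjoint (star B * B) := .star_mul_self B
  have hanti : Antitone fun n => ‖(B ^ n) x‖ ^ 2 := antitone_nat_of_succ_le fun n => by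
    rw [pow_succ' B, mul_apply_eq_comp]
    gcongr
    exact norm_apply_le_of_norm_apply_lt hstrict _
  have hconv : Tendsto (fun n => re ⟪x, ((star B * B) ^ n) x⟫_𝕜) atTop
      (𝓝 (⨅ n, ‖(B ^ n) x‖ ^ 2)) := by
    simpa only [norm_pow_apply_sq_eq_re_inner] using
      tendsto_atTop_ciInf hanti ⟨0, by rintro _ ⟨n, rfl⟩; positivity⟩
  obtain ⟨y, hy⟩ := cauchySeq_tendsto_of_complete (hT.cauchySeq_pow_apply hconv)
  have hTy : (star B * B) y = y := by
    refine tendsto_nhds_unique (((star B * B).continuous.tendsto y).comp hy) ?_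
    simpa only [Function.comp_def, ← mul_apply_eq_comp, ← pow_succ'] using
      hy.comp (tendsto_add_atTop_nat 1)
  have hy0 : y = 0 := by
    by_contra hne
    have h1 := norm_pow_apply_sq_eq_re_inner (B := B) y 1
    simp only [pow_one] at h1
    rw [hTy, inner_self_eq_norm_sq] at h1
    nlinarith [hstrict y hne, norm_nonneg (B y)]
  have hsq : Tendsto (fun n => ‖(B ^ n) x‖ ^ 2) atTop (𝓝 0) := by
    have hinner : Tendsto (fun n => ⟪x, ((star B * B) ^ n) x⟫_𝕜) atTop (𝓝 ⟪x, y⟫_𝕜) :=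
      tendsto_const_nhds.inner hy
    simpa only [norm_pow_apply_sq_eq_re_inner, hy0, inner_zero_right, map_zero,
      Function.comp_def] using (continuous_re.tendsto _).comp hinner
  rw [tendsto_zero_iff_norm_tendsto_zero]
  simpa [Real.sqrt_sq (norm_nonneg _)] using hsq.sqrt

end Powers

section Defect

variable {H : Type*} [NormedAddCommGroup H] [InnerProductSpace ℂ H] [CompleteSpace H]

noncomputable def defectOperator (B : H →L[ℂ] H) : H →L[ℂ] H := CFC.sqrt (1 - star B * B)

lemma isSelfAdjoint_defectOperator (B : H →L[ℂ] H) : IsSelfAdjoint (defectOperator B) :=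
  (CFC.sqrt_nonneg _).isSelfAdjoint

lemma norm_defectOperator_apply_sq {B : H →L[ℂ] H} (hB : ‖B‖ ≤ 1) (x : H) :
    ‖defectOperator B x‖ ^ 2 = ‖x‖ ^ 2 - ‖B x‖ ^ 2 := by
  have hpos : 0 ≤ 1 - star B * B := by
    refine sub_nonneg.mpr ((CStarAlgebra.norm_le_one_iff_of_nonneg _).mp ?_)
    rw [CStarRing.norm_star_mul_self]
    exact mul_le_one₀ hB (norm_nonneg _) hB
  have hsq : star (defectOperator B) * defectOperator B = 1 - star B * B := by
    rw [(isSelfAdjoint_defectOperator B).star_eq, defectOperator, CFC.sqrt_mul_sqrt_self _ hpos]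
  rw [apply_norm_sq_eq_inner_adjoint_right, ← star_eq_adjoint, ← mul_def, hsq]
  rw [sub_apply, one_apply_eq_self, inner_sub_right, map_sub, inner_self_eq_norm_sq,
    apply_norm_sq_eq_inner_adjoint_right B]
  rfl

lemma injective_defectOperator {B : H →L[ℂ] H} (hB : ‖B‖ ≤ 1)
    (hstrict : ∀ x, x ≠ 0 → ‖B x‖ < ‖x‖) : Function.Injective (defectOperator B) := by
  refine (injective_iff_map_eq_zero _).mpr fun x hx => ?_
  by_contra hne
  have h := norm_defectOperator_apply_sq hB x
  rw [hx, norm_zero] at h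
  nlinarith [hstrict x hne, norm_nonneg (B x)]

lemma hasSum_norm_defectOperator_pow_apply_sq {B : H →L[ℂ] H} (hB : ‖B‖ ≤ 1) {x : H}
    (hx : Tendsto (fun n => (B ^ n) x) atTop (𝓝 0)) :
    HasSum (fun n => ‖defectOperator B ((B ^ n) x)‖ ^ 2) (‖x‖ ^ 2) := by
  have hterm : ∀ n, ‖defectOperator B ((B ^ n) x)‖ ^ 2
      = ‖(B ^ n) x‖ ^ 2 - ‖(B ^ (n + 1)) x‖ ^ 2 := fun n => by
    rw [norm_defectOperator_apply_sq hB, pow_succ' B, mul_apply_eq_comp]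
  rw [hasSum_iff_tendsto_nat_of_nonneg (fun _ => sq_nonneg _)]
  simp only [hterm, Finset.sum_range_sub', pow_zero, one_apply_eq_self]
  have hsq : Tendsto (fun n => ‖(B ^ n) x‖ ^ 2) atTop (𝓝 0) := by
    simpa using (hx.norm).pow 2
  simpa using hsq.const_sub (‖x‖ ^ 2)

theorem tsum_nnnorm_inner_pow_defectOperator_sq {ι : Type*} (b : HilbertBasis ι ℂ H)
    {A : H →L[ℂ] H} (hA : ‖A‖ ≤ 1) {x : H}
    (hx : Tendsto (fun n => (adjoint A ^ n) x) atTop (𝓝 0)) :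
    ∑' p : ι × ℕ, (‖⟪x, (A ^ p.2) (defectOperator (adjoint A) (b p.1))⟫_ℂ‖₊ : ℝ≥0∞) ^ 2
      = (‖x‖₊ : ℝ≥0∞) ^ 2 := by
  have hnorm_adj : ‖adjoint A‖ ≤ 1 := by rwa [LinearIsometryEquiv.norm_map]
  have hterm : ∀ (i : ι) (n : ℕ), ‖⟪x, (A ^ n) (defectOperator (adjoint A) (b i))⟫_ℂ‖₊
      = ‖⟪b i, defectOperator (adjoint A) ((adjoint A ^ n) x)⟫_ℂ‖₊ := fun i n => by
    rw [← adjoint_inner_left, ← adjoint_inner_left, (isSelfAdjoint_defectOperator _).adjoint_eq,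
      ← star_eq_adjoint, ← star_eq_adjoint, star_pow]
    exact NNReal.eq (norm_inner_symm _ _)
  calc ∑' p : ι × ℕ, (‖⟪x, (A ^ p.2) (defectOperator (adjoint A) (b p.1))⟫_ℂ‖₊ : ℝ≥0∞) ^ 2
      = ∑' (n : ℕ) (i : ι),
          (‖⟪b i, defectOperator (adjoint A) ((adjoint A ^ n) x)⟫_ℂ‖₊ : ℝ≥0∞) ^ 2 := by
        rw [ENNReal.tsum_prod', ENNReal.tsum_comm]
        simp only [hterm]
    _ = ∑' n : ℕ, (‖defectOperator (adjoint A) ((adjoint A ^ n) x)‖₊ : ℝ≥0∞) ^ 2 :=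
        tsum_congr fun n => tsum_coe_nnnorm_sq_eq_of_hasSum (b.hasSum_norm_inner_sq _)
    _ = (‖x‖₊ : ℝ≥0∞) ^ 2 :=
        tsum_coe_nnnorm_sq_eq_of_hasSum (hasSum_norm_defectOperator_pow_apply_sq hnorm_adj hx)

end Defect

/-- If `A` is a bounded normal operator on a separable complex Hilbert space `H` with
`‖A‖ ≤ 1` and `‖A f‖ < ‖f‖` for all nonzero `f`, then there exists a countable set `G ⊆ H`
such that `{A^n g : g ∈ G, n ∈ ℕ}` is a Parseval frame for `H`. -/
theorem stmt_7 {H : Type*} [NormedAddCommGroup H] [InnerProductSpace ℂ H] [CompleteSpace H]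
    [TopologicalSpace.SeparableSpace H]
    (A : H →L[ℂ] H) (hA : adjoint A ∘L A = A ∘L adjoint A)
    (hnorm : ‖A‖ ≤ 1) (hcontr : ∀ f : H, f ≠ 0 → ‖A f‖ < ‖f‖) :
    ∃ G : Set H, G.Countable ∧ ∀ f : H,
      (∑' p : ↥G × ℕ, (‖⟪f, (A ^ p.2) (p.1 : H)⟫_ℂ‖₊ : ℝ≥0∞) ^ 2) = (‖f‖₊ : ℝ≥0∞) ^ 2 := by
  have hA_normal : IsStarNormal A := ⟨hA⟩
  have : IsStarNormal (adjoint A) := by rw [← star_eq_adjoint]; infer_instance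
  have hstrict : ∀ x, x ≠ 0 → ‖adjoint A x‖ < ‖x‖ := fun x hx =>
    isStarNormal_iff_norm_eq_adjoint.mp hA_normal x ▸ hcontr x hx
  have hnorm_adj : ‖adjoint A‖ ≤ 1 := by rwa [LinearIsometryEquiv.norm_map]
  obtain ⟨w, b, -⟩ := exists_hilbertBasis ℂ H
  have : Countable w := b.orthonormal.countable
  have hinj : Function.Injective (defectOperator (adjoint A) ∘ b) :=
    (injective_defectOperator hnorm_adj hstrict).comp b.orthonormal.linearIndependent.injective
  refine ⟨Set.range (defectOperator (adjoint A) ∘ b), Set.countable_range _, fun f => ?_⟩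
  rw [← ((Equiv.ofInjective _ hinj).prodCongr (Equiv.refl ℕ)).tsum_eq]
  exact tsum_nnnorm_inner_pow_defectOperator_sq b hnorm
    (tendsto_pow_apply_zero_of_isStarNormal hstrict f)
end

section
/- Let H be an infinite-dimensional complex Hilbert space, A a bounded normal operator on H, and G a finite set of vectors in H such that the family (A^n g), indexed by (g,n) ∈ G × ℕ, satisfies a lower frame bound: there is α > 0 with α‖f‖² ≤ Σ_{g∈G} Σ_{n≥0} |⟨f, A^n g⟩|² for all f ∈ H. Then for every r with 0 < r < 1, the spectrum of A is not contained in the closed disk { z ∈ ℂ : |z| ≤ r }; equivalently, since A is normal, ‖A‖ ≥ 1. -/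
/-!
If `‖A‖ < 1`, then `|⟪f, Aⁿ g⟫|² ≤ ‖A‖ᴺ ‖A‖ⁿ ‖g‖²` as soon as `n ≥ N`, so a unit vector `f`
orthogonal to the finitely many vectors `Aⁿ g` with `g ∈ G` and `n < N` (which exists because
`H` is infinite dimensional) has frame sum `O(‖A‖ᴺ)`, contradicting the lower frame bound for
large `N`. Hence `‖A‖ ≥ 1`; for normal `A` the norm is the spectral radius, so the spectrum
cannot lie in a disk of radius `r < 1`.
-/

open ContinuousLinearMap
open scoped InnerProductSpace ENNReal

theorem IsStarNormal.norm_le_of_spectrum_subset_closedBall {A : Type*} [CStarAlgebra A]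
    {a : A} [IsStarNormal a] {r : ℝ} (hr : 0 ≤ r)
    (h : spectrum ℂ a ⊆ Metric.closedBall 0 r) : ‖a‖ ≤ r := by
  have : spectralRadius ℂ a ≤ r.toNNReal := by
    refine iSup₂_le fun k hk => ENNReal.coe_le_coe.mpr ?_
    exact (Real.le_toNNReal_iff_coe_le hr).mpr (by simpa using h hk)
  rwa [IsStarNormal.spectralRadius_eq_nnnorm, ENNReal.coe_le_coe,
    Real.le_toNNReal_iff_coe_le hr] at this

theorem ContinuousLinearMap.nnnorm_pow_apply_le {𝕜 E : Type*} [NontriviallyNormedField 𝕜]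
    [SeminormedAddCommGroup E] [NormedSpace 𝕜 E] (A : E →L[𝕜] E) (x : E) (n : ℕ) :
    ‖(A ^ n) x‖₊ ≤ ‖A‖₊ ^ n * ‖x‖₊ := by
  induction n with
  | zero => simp
  | succ n ih =>
    calc ‖(A ^ (n + 1)) x‖₊ = ‖A ((A ^ n) x)‖₊ := by rw [pow_succ']; rfl
      _ ≤ ‖A‖₊ * (‖A‖₊ ^ n * ‖x‖₊) := (A.le_opNNNorm _).trans (by gcongr)
      _ = ‖A‖₊ ^ (n + 1) * ‖x‖₊ := by ring

section InnerProductSpace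

variable {𝕜 H : Type*} [RCLike 𝕜] [NormedAddCommGroup H] [InnerProductSpace 𝕜 H]

theorem exists_norm_eq_one_forall_inner_eq_zero (hdim : ¬ FiniteDimensional 𝕜 H) {S : Set H}
    (hS : S.Finite) : ∃ f : H, ‖f‖ = 1 ∧ ∀ v ∈ S, ⟪f, v⟫_𝕜 = 0 := by
  have : FiniteDimensional 𝕜 (Submodule.span 𝕜 S) := FiniteDimensional.span_of_finite 𝕜 hS
  have hS_ne_top : Submodule.span 𝕜 S ≠ ⊤ := fun h =>
    hdim <| Module.finite_def.mpr (h ▸ Submodule.fg_span hS)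
  obtain ⟨f, hf_orth, hf⟩ := Submodule.exists_mem_ne_zero_of_ne_bot
    (mt Submodule.orthogonal_eq_bot_iff.mp hS_ne_top)
  refine ⟨(‖f‖⁻¹ : 𝕜) • f, norm_smul_inv_norm hf, fun v hv => ?_⟩
  rw [inner_smul_left, Submodule.inner_left_of_mem_orthogonal (Submodule.subset_span hv) hf_orth,
    mul_zero]

theorem nnnorm_inner_pow_apply_sq_le {A : H →L[𝕜] H} (hA : ‖A‖₊ ≤ 1) {f : H} (hf : ‖f‖ ≤ 1)
    (g : H) {N n : ℕ} (horth : n < N → ⟪f, (A ^ n) g⟫_𝕜 = 0) :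
    ‖⟪f, (A ^ n) g⟫_𝕜‖₊ ^ 2 ≤ ‖A‖₊ ^ N * (‖g‖₊ ^ 2 * ‖A‖₊ ^ n) := by
  rcases lt_or_ge n N with hn | hn
  · rw [horth hn]; simp
  have hinner : ‖⟪f, (A ^ n) g⟫_𝕜‖₊ ≤ ‖A‖₊ ^ n * ‖g‖₊ :=
    calc ‖⟪f, (A ^ n) g⟫_𝕜‖₊ ≤ ‖f‖₊ * ‖(A ^ n) g‖₊ := nnnorm_inner_le_nnnorm _ _
      _ ≤ 1 * (‖A‖₊ ^ n * ‖g‖₊) := mul_le_mul' hf (A.nnnorm_pow_apply_le g n)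
      _ = ‖A‖₊ ^ n * ‖g‖₊ := one_mul _
  calc ‖⟪f, (A ^ n) g⟫_𝕜‖₊ ^ 2 ≤ (‖A‖₊ ^ n * ‖g‖₊) ^ 2 := by gcongr
    _ = ‖A‖₊ ^ n * (‖g‖₊ ^ 2 * ‖A‖₊ ^ n) := by ring
    _ ≤ ‖A‖₊ ^ N * (‖g‖₊ ^ 2 * ‖A‖₊ ^ n) :=
      mul_le_mul_left (pow_le_pow_right_of_le_one' hA hn) _

theorem tsum_nnnorm_inner_pow_apply_sq_le {A : H →L[𝕜] H} (hA : ‖A‖₊ ≤ 1) {f : H}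
    (hf : ‖f‖ ≤ 1) (G : Set H) [Fintype G] {N : ℕ}
    (horth : ∀ g ∈ G, ∀ n < N, ⟪f, (A ^ n) g⟫_𝕜 = 0) :
    ∑' p : G × ℕ, (‖⟪f, (A ^ p.2) (p.1 : H)⟫_𝕜‖₊ : ℝ≥0∞) ^ 2 ≤
      (‖A‖₊ : ℝ≥0∞) ^ N * ((∑ g : G, (‖(g : H)‖₊ : ℝ≥0∞) ^ 2) * (1 - (‖A‖₊ : ℝ≥0∞))⁻¹) :=
  calc ∑' p : G × ℕ, (‖⟪f, (A ^ p.2) (p.1 : H)⟫_𝕜‖₊ : ℝ≥0∞) ^ 2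
      ≤ ∑' p : G × ℕ, (‖A‖₊ : ℝ≥0∞) ^ N * ((‖(p.1 : H)‖₊ : ℝ≥0∞) ^ 2 * (‖A‖₊ : ℝ≥0∞) ^ p.2) :=
        ENNReal.tsum_le_tsum fun p => by
          exact_mod_cast nnnorm_inner_pow_apply_sq_le hA hf p.1 (horth p.1 p.1.2 p.2)
    _ = (‖A‖₊ : ℝ≥0∞) ^ N * ((∑ g : G, (‖(g : H)‖₊ : ℝ≥0∞) ^ 2) * (1 - (‖A‖₊ : ℝ≥0∞))⁻¹) := by
        simp only [ENNReal.tsum_mul_left, ENNReal.tsum_prod', ENNReal.tsum_geometric,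
          tsum_fintype, Finset.sum_mul]

theorem one_le_norm_of_lower_frame_bound (hdim : ¬ FiniteDimensional 𝕜 H) (A : H →L[𝕜] H)
    {G : Set H} (hG : G.Finite) {α : ℝ} (hα : 0 < α)
    (hlower : ∀ f : H, ENNReal.ofReal (α * ‖f‖ ^ 2) ≤
      ∑' p : G × ℕ, (‖⟪f, (A ^ p.2) (p.1 : H)⟫_𝕜‖₊ : ℝ≥0∞) ^ 2) :
    1 ≤ ‖A‖ := by
  by_contra! hA
  have : Fintype G := hG.fintype
  have hA' : (‖A‖₊ : ℝ≥0∞) < 1 := by exact_mod_cast hA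
  set C : ℝ≥0∞ := (∑ g : G, (‖(g : H)‖₊ : ℝ≥0∞) ^ 2) * (1 - (‖A‖₊ : ℝ≥0∞))⁻¹
  have hC : C ≠ ∞ := ENNReal.mul_ne_top (by simp) (ENNReal.inv_ne_top.mpr (tsub_pos_of_lt hA').ne')
  have hlim : Filter.Tendsto (fun N : ℕ => (‖A‖₊ : ℝ≥0∞) ^ N * C) Filter.atTop (nhds 0) := by
    simpa using ENNReal.Tendsto.mul_const
      (ENNReal.tendsto_pow_atTop_nhds_zero_of_lt_one hA') (Or.inr hC)
  obtain ⟨N, hN⟩ := (hlim.eventually (gt_mem_nhds (ENNReal.ofReal_pos.mpr hα))).exists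
  obtain ⟨f, hf, horth⟩ := exists_norm_eq_one_forall_inner_eq_zero hdim
    ((Set.finite_Iio N).image2 (fun n g => (A ^ n) g) hG)
  have hframe := (hlower f).trans (tsum_nnnorm_inner_pow_apply_sq_le
    (by exact_mod_cast hA'.le) hf.le G fun g hg n hn => horth _ (Set.mem_image2_of_mem hn hg))
  rw [hf, one_pow, mul_one] at hframe
  exact (hframe.trans_lt hN).false

end InnerProductSpace

/-- If `H` is infinite dimensional, `A` is a bounded normal operator and `G` is a finite set
of vectors such that `{A^n g : g ∈ G, n ∈ ℕ}` satisfies a lower frame bound, then the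
spectrum of `A` is not contained in any closed disk of radius `r < 1`, equivalently `‖A‖ ≥ 1`. -/
theorem stmt_8 {H : Type*} [NormedAddCommGroup H] [InnerProductSpace ℂ H] [CompleteSpace H]
    (hdim : ¬ FiniteDimensional ℂ H)
    (A : H →L[ℂ] H) (hA : adjoint A ∘L A = A ∘L adjoint A)
    (G : Set H) (hGfin : G.Finite)
    (hlower : ∃ α : ℝ, 0 < α ∧ ∀ f : H,
      ENNReal.ofReal (α * ‖f‖ ^ 2) ≤
        ∑' p : ↥G × ℕ, (‖⟪f, (A ^ p.2) (p.1 : H)⟫_ℂ‖₊ : ℝ≥0∞) ^ 2) :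
    (∀ r : ℝ, 0 < r → r < 1 → ¬ spectrum ℂ A ⊆ Metric.closedBall (0 : ℂ) r) ∧ 1 ≤ ‖A‖ := by
  have : IsStarNormal A := ⟨hA⟩
  obtain ⟨α, hα, hlower⟩ := hlower
  have hnorm : 1 ≤ ‖A‖ := one_le_norm_of_lower_frame_bound hdim A hGfin hα hlower
  refine ⟨fun r hr0 hr1 hspec => ?_, hnorm⟩
  linarith [IsStarNormal.norm_le_of_spectrum_subset_closedBall hr0.le hspec]
end

section
/- Let H be an infinite-dimensional separable complex Hilbert space, A a bounded self-adjoint operator on H, and G a countable set of vectors in H with A^n g ≠ 0 for all g ∈ G and all n ∈ ℕ. Then the normalized family (A^n g / ‖A^n g‖), indexed by pairs (g,n) ∈ G × ℕ, is not a frame for H. -/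
/-!
Only the upper frame bound fails, already along the orbit of a single `g ∈ G`. Writing
`u n = ‖Aⁿ g‖`, self-adjointness gives `⟪Aⁿ g, Aⁿ⁺²ᵏ g⟫ = u (n + k) ^ 2`, so by Cauchy–Schwarz
`u` is log-convex: the ratios `u (n + 1) / u n` increase, and being bounded by `‖A‖` they
converge to some `R > 0`. Hence for each fixed `k` the correlation
`u (n + k) ^ 2 / (u n * u (n + 2 * k))` between the normalized vectors `eₙ` and `eₙ₊₂ₖ` tends
to `1`, so for any `K` the unit vector `e_N` (with `N` large) has `K` frame coefficients of
size at least `1 / 2`, which no Bessel bound survives. The empty family violates the lower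
bound since `H ≠ 0`.
-/

open ContinuousLinearMap Filter Topology
open scoped InnerProductSpace ENNReal

section LogConvex

variable {u : ℕ → ℝ}

theorem monotone_succ_div_of_sq_le_mul (hu : ∀ n, 0 < u n)
    (hconv : ∀ n, u (n + 1) ^ 2 ≤ u n * u (n + 2)) : Monotone fun n => u (n + 1) / u n := by
  refine monotone_nat_of_le_succ fun n => ?_
  rw [div_le_div_iff₀ (hu n) (hu (n + 1))]
  nlinarith [hconv n]

theorem tendsto_add_div_of_tendsto_succ_div {R : ℝ} (hu : ∀ n, u n ≠ 0)
    (hR : Tendsto (fun n => u (n + 1) / u n) atTop (𝓝 R)) (k : ℕ) :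
    Tendsto (fun n => u (n + k) / u n) atTop (𝓝 (R ^ k)) := by
  induction k with
  | zero => simp [div_self (hu _)]
  | succ k ih =>
    have hshift : Tendsto (fun n => u (n + k + 1) / u (n + k)) atTop (𝓝 R) :=
      (tendsto_add_atTop_iff_nat k).mpr hR
    rw [pow_succ']
    refine (hshift.mul ih).congr fun n => ?_
    rw [div_mul_div_cancel₀ (hu _), add_assoc]

theorem tendsto_sq_div_mul_of_tendsto_succ_div {R : ℝ} (hu : ∀ n, u n ≠ 0) (hR0 : R ≠ 0)
    (hR : Tendsto (fun n => u (n + 1) / u n) atTop (𝓝 R)) (k : ℕ) :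
    Tendsto (fun n => u (n + k) ^ 2 / (u n * u (n + 2 * k))) atTop (𝓝 1) := by
  have hfirst := tendsto_add_div_of_tendsto_succ_div hu hR k
  have hsecond : Tendsto (fun n => u (n + k + k) / u (n + k)) atTop (𝓝 (R ^ k)) :=
    (tendsto_add_atTop_iff_nat k).mpr hfirst
  rw [← div_self (pow_ne_zero k hR0)]
  refine (hfirst.div hsecond (pow_ne_zero k hR0)).congr fun n => ?_
  rw [Pi.div_apply, two_mul, ← add_assoc]
  field_simp [hu n, hu (n + k), hu (n + k + k)]

theorem tendsto_sq_div_mul_of_sq_le_mul (hu : ∀ n, 0 < u n)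
    (hconv : ∀ n, u (n + 1) ^ 2 ≤ u n * u (n + 2))
    (hbdd : BddAbove (Set.range fun n => u (n + 1) / u n)) (k : ℕ) :
    Tendsto (fun n => u (n + k) ^ 2 / (u n * u (n + 2 * k))) atTop (𝓝 1) := by
  have hlim := tendsto_atTop_ciSup (monotone_succ_div_of_sq_le_mul hu hconv) hbdd
  have hpos : 0 < ⨆ n, u (n + 1) / u n := (div_pos (hu 1) (hu 0)).trans_le (le_ciSup hbdd 0)
  exact tendsto_sq_div_mul_of_tendsto_succ_div (fun n => (hu n).ne') hpos.ne' hlim k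

end LogConvex

theorem ContinuousLinearMap.norm_pow_succ_apply_div_le {𝕜 E : Type*} [NontriviallyNormedField 𝕜]
    [SeminormedAddCommGroup E] [NormedSpace 𝕜 E] (A : E →L[𝕜] E) (x : E) (n : ℕ) :
    ‖(A ^ (n + 1)) x‖ / ‖(A ^ n) x‖ ≤ ‖A‖ := by
  rw [pow_succ', mul_apply_eq_comp]
  exact div_le_of_le_mul₀ (norm_nonneg _) (norm_nonneg _) (A.le_opNorm _)

section Operator

variable {𝕜 H : Type*} [RCLike 𝕜] [NormedAddCommGroup H] [InnerProductSpace 𝕜 H]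
  [CompleteSpace H] {A : H →L[𝕜] H}

theorem IsSelfAdjoint.inner_pow_apply_pow_add_two_mul_apply (hA : IsSelfAdjoint A) (x : H)
    (n k : ℕ) : ⟪(A ^ n) x, (A ^ (n + 2 * k)) x⟫_𝕜 = (‖(A ^ (n + k)) x‖ : 𝕜) ^ 2 := by
  have hsplit : (A ^ (n + 2 * k)) x = (A ^ k) ((A ^ (n + k)) x) := by
    rw [← mul_apply_eq_comp, ← pow_add]; ring_nf
  rw [hsplit, ← (hA.pow k).isSymmetric.apply_clm, ← mul_apply_eq_comp, ← pow_add, add_comm k n,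
    inner_self_eq_norm_sq_to_K]

theorem IsSelfAdjoint.sq_norm_pow_succ_apply_le (hA : IsSelfAdjoint A) (x : H) (n : ℕ) :
    ‖(A ^ (n + 1)) x‖ ^ 2 ≤ ‖(A ^ n) x‖ * ‖(A ^ (n + 2)) x‖ := by
  have h := norm_inner_le_norm (𝕜 := 𝕜) ((A ^ n) x) ((A ^ (n + 2 * 1)) x)
  rwa [hA.inner_pow_apply_pow_add_two_mul_apply, norm_pow, RCLike.norm_ofReal, abs_norm] at h

theorem IsSelfAdjoint.tendsto_sq_norm_pow_apply_div (hA : IsSelfAdjoint A) {x : H}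
    (hx : ∀ n, (A ^ n) x ≠ 0) (k : ℕ) :
    Tendsto (fun n => ‖(A ^ (n + k)) x‖ ^ 2 / (‖(A ^ n) x‖ * ‖(A ^ (n + 2 * k)) x‖))
      atTop (𝓝 1) :=
  tendsto_sq_div_mul_of_sq_le_mul (fun n => norm_pos_iff.mpr (hx n))
    (hA.sq_norm_pow_succ_apply_le x) ⟨‖A‖, by
      rintro _ ⟨n, rfl⟩; exact A.norm_pow_succ_apply_div_le x n⟩ k

end Operator

section Complex

variable {H : Type*} [NormedAddCommGroup H] [InnerProductSpace ℂ H] [CompleteSpace H]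
  {A : H →L[ℂ] H}

theorem IsSelfAdjoint.norm_inner_normalized_pow_apply (hA : IsSelfAdjoint A) (x : H) (n k : ℕ) :
    ‖⟪(‖(A ^ n) x‖⁻¹ : ℝ) • (A ^ n) x, (‖(A ^ (n + 2 * k)) x‖⁻¹ : ℝ) • (A ^ (n + 2 * k)) x⟫_ℂ‖ =
      ‖(A ^ (n + k)) x‖ ^ 2 / (‖(A ^ n) x‖ * ‖(A ^ (n + 2 * k)) x‖) := by
  rw [← Complex.coe_smul, ← Complex.coe_smul, inner_smul_left, inner_smul_right,
    hA.inner_pow_apply_pow_add_two_mul_apply]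
  simp only [norm_mul, Complex.norm_conj, norm_pow, Complex.norm_real, norm_inv, norm_norm,
    RCLike.norm_ofReal, abs_norm]
  field_simp

theorem IsSelfAdjoint.not_bessel_normalized_pow_apply (hA : IsSelfAdjoint A) {x : H}
    (hx : ∀ n, (A ^ n) x ≠ 0) (β : ℝ) :
    ¬ ∀ f : H, ∑' n : ℕ, (‖⟪f, (‖(A ^ n) x‖⁻¹ : ℝ) • (A ^ n) x⟫_ℂ‖₊ : ℝ≥0∞) ^ 2 ≤
      ENNReal.ofReal (β * ‖f‖ ^ 2) := by
  intro hbessel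
  -- `max β 0` because `ENNReal.ofReal` sends a negative `β` to `0`.
  obtain ⟨K, hK⟩ := exists_nat_gt (4 * max β 0)
  obtain ⟨N, hN⟩ : ∃ N, ∀ k ∈ Finset.range K,
      1 / 2 ≤ ‖(A ^ (N + k)) x‖ ^ 2 / (‖(A ^ N) x‖ * ‖(A ^ (N + 2 * k)) x‖) :=
    ((Finset.range K).eventually_all.2 fun k _ =>
      (hA.tendsto_sq_norm_pow_apply_div hx k).eventually (eventually_ge_nhds (by norm_num))).exists
  set f : H := (‖(A ^ N) x‖⁻¹ : ℝ) • (A ^ N) x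
  set T : ℕ → ℝ≥0∞ := fun n => (‖⟪f, (‖(A ^ n) x‖⁻¹ : ℝ) • (A ^ n) x⟫_ℂ‖₊ : ℝ≥0∞) ^ 2
  have hterm : ∀ k ∈ Finset.range K, ENNReal.ofReal (1 / 4) ≤ T (N + 2 * k) := by
    intro k hk
    simp only [T, f]
    rw [← enorm_eq_nnnorm, ← ofReal_norm, ← ENNReal.ofReal_pow (norm_nonneg _),
      hA.norm_inner_normalized_pow_apply x N k]
    exact ENNReal.ofReal_le_ofReal (by nlinarith [hN k hk])
  have hsum : ENNReal.ofReal (K / 4) ≤ ENNReal.ofReal (max β 0) := calc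
    ENNReal.ofReal (K / 4) = ∑ _k ∈ Finset.range K, ENNReal.ofReal (1 / 4) := by
      rw [Finset.sum_const, Finset.card_range, nsmul_eq_mul, ← ENNReal.ofReal_natCast,
        ← ENNReal.ofReal_mul (Nat.cast_nonneg K)]
      ring_nf
    _ ≤ ∑ k ∈ Finset.range K, T (N + 2 * k) := Finset.sum_le_sum hterm
    _ ≤ ∑' k, T (N + 2 * k) := ENNReal.sum_le_tsum _
    _ ≤ ∑' n, T n := ENNReal.tsum_comp_le_tsum_of_injective (fun a b h => by omega) T
    _ ≤ ENNReal.ofReal (β * ‖f‖ ^ 2) := hbessel f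
    _ ≤ ENNReal.ofReal (max β 0) := by
      rw [show ‖f‖ = 1 from norm_smul_inv_norm (hx N), one_pow, mul_one]
      exact ENNReal.ofReal_le_ofReal (le_max_left β 0)
  rw [ENNReal.ofReal_le_ofReal_iff (le_max_right β 0)] at hsum
  linarith

end Complex

theorem stmt_11_general {H : Type*} [NormedAddCommGroup H] [InnerProductSpace ℂ H] [CompleteSpace H]
    (hdim : ¬ FiniteDimensional ℂ H)
    (A : H →L[ℂ] H) (hA : adjoint A = A)
    (G : Set H)
    (hnz : ∀ g ∈ G, ∀ n : ℕ, (A ^ n) g ≠ 0) :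
    ¬ ∃ α β : ℝ, 0 < α ∧ α ≤ β ∧ ∀ f : H,
      ENNReal.ofReal (α * ‖f‖ ^ 2) ≤
        (∑' p : ↥G × ℕ, (‖⟪f, (‖(A ^ p.2) (p.1 : H)‖⁻¹ : ℝ) • (A ^ p.2) (p.1 : H)⟫_ℂ‖₊ : ℝ≥0∞) ^ 2) ∧
      (∑' p : ↥G × ℕ, (‖⟪f, (‖(A ^ p.2) (p.1 : H)‖⁻¹ : ℝ) • (A ^ p.2) (p.1 : H)⟫_ℂ‖₊ : ℝ≥0∞) ^ 2) ≤
        ENNReal.ofReal (β * ‖f‖ ^ 2) := by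
  rintro ⟨α, β, hα, -, hframe⟩
  rcases G.eq_empty_or_nonempty with rfl | ⟨g, hg⟩
  · have : Nontrivial H := not_subsingleton_iff_nontrivial.mp fun _ => hdim inferInstance
    obtain ⟨f, hf⟩ := exists_ne (0 : H)
    have hlower := (hframe f).1
    rw [tsum_empty, nonpos_iff_eq_zero, ENNReal.ofReal_eq_zero] at hlower
    exact hlower.not_gt (mul_pos hα (pow_pos (norm_pos_iff.mpr hf) 2))
  · refine (isSelfAdjoint_iff'.mpr hA).not_bessel_normalized_pow_apply (hnz g hg) β fun f => ?_
    exact (ENNReal.tsum_comp_le_tsum_of_injective (Prod.mk_right_injective (⟨g, hg⟩ : G)) _).trans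
      (hframe f).2

/-- If `A` is a bounded self-adjoint operator on an infinite-dimensional separable complex
Hilbert space `H` and `G` is a countable set of vectors with `A^n g ≠ 0` for all `g, n`, then
the normalized system `(A^n g / ‖A^n g‖)_{g ∈ G, n ∈ ℕ}` is not a frame for `H`. -/
theorem stmt_11 {H : Type*} [NormedAddCommGroup H] [InnerProductSpace ℂ H] [CompleteSpace H]
    [TopologicalSpace.SeparableSpace H] (hdim : ¬ FiniteDimensional ℂ H)
    (A : H →L[ℂ] H) (hA : adjoint A = A)
    (G : Set H) (hG : G.Countable)
    (hnz : ∀ g ∈ G, ∀ n : ℕ, (A ^ n) g ≠ 0) :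
    ¬ ∃ α β : ℝ, 0 < α ∧ α ≤ β ∧ ∀ f : H,
      ENNReal.ofReal (α * ‖f‖ ^ 2) ≤
        (∑' p : ↥G × ℕ, (‖⟪f, (‖(A ^ p.2) (p.1 : H)‖⁻¹ : ℝ) • (A ^ p.2) (p.1 : H)⟫_ℂ‖₊ : ℝ≥0∞) ^ 2) ∧
      (∑' p : ↥G × ℕ, (‖⟪f, (‖(A ^ p.2) (p.1 : H)‖⁻¹ : ℝ) • (A ^ p.2) (p.1 : H)⟫_ℂ‖₊ : ℝ≥0∞) ^ 2) ≤
        ENNReal.ofReal (β * ‖f‖ ^ 2) :=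
  stmt_11_general hdim A hA G hnz
end

section
/- Let μ be a finite Borel measure on ℝ whose support is contained in [0, R] for some R > 0, and let (n_k)_{k≥0} be a strictly increasing sequence of natural numbers with n_0 = 0 and Σ_{k≥1} 1/n_k = ∞. If φ : ℝ → ℂ is μ-integrable and ∫ x^{n_k} φ(x) dμ(x) = 0 for every k ≥ 0, then φ = 0 μ-almost everywhere. -/
open MeasureTheory
open scoped ENNReal

/-!
Müntz's construction. Suppose `q = X ^ m + (combination of X ^ i, i ∈ S)` satisfies `|q| ≤ B`
on `[0, 1]`, and `L > m`, `L ∉ S`. Then `x ↦ (L - m) x ^ L ∫_x^1 q(t) t ^ (-L-1) dt` is again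
a polynomial of this shape, with `S` enlarged by `L`, and it is bounded by `(1 - m / L) B` on
`[0, 1]`. Iterating over the exponents `n_k > m` approximates `x ^ m` by combinations of the
`x ^ n_k` with error `∏ (1 - m / n_k)`, which tends to `0` because `∑ 1 / n_k` diverges. Hence
all moments of `φ dμ` vanish, so by Weierstrass `∫ g φ dμ = 0` for every continuous `g`, and
`φ = 0` almost everywhere.
-/

open Polynomial Set Filter Topology

noncomputable def monomialSpan (s : Set ℕ) : Submodule ℝ ℝ[X] :=
  Submodule.span ℝ ((X ^ ·) '' s)

lemma X_pow_mem_monomialSpan {s : Set ℕ} {i : ℕ} (hi : i ∈ s) :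
    (X ^ i : ℝ[X]) ∈ monomialSpan s :=
  Submodule.subset_span ⟨i, hi, rfl⟩

lemma monomialSpan_mono {s t : Set ℕ} (h : s ⊆ t) : monomialSpan s ≤ monomialSpan t :=
  Submodule.span_mono (image_mono h)

lemma monomialSpan_univ : monomialSpan univ = ⊤ := by
  rw [monomialSpan, image_univ, ← (basisMonomials ℝ).span_eq, coe_basisMonomials]
  simp_rw [X_pow_eq_monomial]

/-- `(X ^ i - X ^ L) / (L - i)` is `x ^ L ∫_x^1 t ^ i / t ^ (L + 1) dt` as a function of
`x > 0`. -/
noncomputable def muntzStep (L : ℕ) : ℝ[X] →ₗ[ℝ] ℝ[X] :=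
  (basisMonomials ℝ).constr ℝ fun i => ((L : ℝ) - i)⁻¹ • (X ^ i - X ^ L)

lemma muntzStep_X_pow (L i : ℕ) : muntzStep L (X ^ i) = ((L : ℝ) - i)⁻¹ • (X ^ i - X ^ L) := by
  have h := (basisMonomials ℝ).constr_basis ℝ
    (fun i : ℕ => ((L : ℝ) - i)⁻¹ • (X ^ i - X ^ L : ℝ[X])) i
  simpa only [muntzStep, coe_basisMonomials, ← X_pow_eq_monomial] using h

lemma muntzStep_mem_monomialSpan {L : ℕ} {s : Set ℕ} {q : ℝ[X]} (hq : q ∈ monomialSpan s) :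
    muntzStep L q ∈ monomialSpan (insert L s) := by
  refine (Submodule.span_le (p := (monomialSpan (insert L s)).comap (muntzStep L)).2 ?_)
    hq
  rintro _ ⟨i, hi, rfl⟩
  rw [SetLike.mem_coe, Submodule.mem_comap, muntzStep_X_pow]
  exact Submodule.smul_mem _ _ (sub_mem (X_pow_mem_monomialSpan (mem_insert_of_mem L hi))
    (X_pow_mem_monomialSpan (mem_insert L s)))

lemma pow_mul_integral_pow_div_pow {i L : ℕ} (hi : i ≠ L) {x : ℝ} (hx : 0 < x) :
    x ^ L * ∫ t in x..1, t ^ i / t ^ (L + 1) = (x ^ i - x ^ L) / (L - i) := by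
  have h0 : (0 : ℝ) ∉ uIcc x 1 := fun h => (lt_min hx one_pos).not_ge h.1
  have hzpow : ∀ t ∈ uIcc x 1, t ^ i / t ^ (L + 1) = t ^ ((i : ℤ) - L - 1) := fun t ht => by
    have ht : t ≠ 0 := fun h => h0 (h ▸ ht)
    rw [zpow_sub₀ ht, zpow_sub₀ ht, zpow_natCast, zpow_natCast, zpow_one, div_div, pow_succ]
  have hiL : (i : ℝ) - L ≠ 0 := sub_ne_zero.2 (Nat.cast_injective.ne hi)
  have hLi : (L : ℝ) - i ≠ 0 := sub_ne_zero.2 (Nat.cast_injective.ne hi.symm)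
  rw [intervalIntegral.integral_congr hzpow,
    integral_zpow (Or.inr ⟨fun h => hi (by omega), h0⟩)]
  push_cast
  simp only [sub_add_cancel, one_zpow]
  rw [zpow_sub₀ hx.ne', zpow_natCast, zpow_natCast, eq_div_iff hLi]
  field_simp
  ring

lemma intervalIntegrable_div_pow {f : ℝ → ℝ} (hf : Continuous f) (L : ℕ) {x : ℝ} (hx : 0 < x) :
    IntervalIntegrable (fun t => f t / t ^ (L + 1)) volume x 1 :=
  (hf.continuousOn.div (continuousOn_pow _) fun _ ht =>
    (pow_pos ((lt_min hx one_pos).trans_le ht.1) _).ne').intervalIntegrable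

lemma eval_muntzStep {L : ℕ} {s : Set ℕ} (hL : L ∉ s) {q : ℝ[X]} (hq : q ∈ monomialSpan s)
    {x : ℝ} (hx : 0 < x) :
    (muntzStep L q).eval x = x ^ L * ∫ t in x..1, q.eval t / t ^ (L + 1) := by
  induction hq using Submodule.span_induction with
  | mem _ h =>
    obtain ⟨i, hi, rfl⟩ := h
    simp only [muntzStep_X_pow, eval_smul, eval_sub, eval_pow, eval_X, smul_eq_mul]
    rw [pow_mul_integral_pow_div_pow (ne_of_mem_of_not_mem hi hL) hx, inv_mul_eq_div]
  | zero => simp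
  | add p q _ _ hp hq =>
    rw [map_add, eval_add, hp, hq, ← mul_add, ← intervalIntegral.integral_add
      (intervalIntegrable_div_pow p.continuous L hx)
      (intervalIntegrable_div_pow q.continuous L hx)]
    simp only [eval_add, add_div]
  | smul a p _ hp =>
    simp only [map_smul, eval_smul, hp, smul_eq_mul, mul_div_assoc,
      intervalIntegral.integral_const_mul]
    ring

lemma abs_eval_muntzStep_le {L : ℕ} (hL0 : 0 < L) {s : Set ℕ} (hL : L ∉ s) {q : ℝ[X]}
    (hq : q ∈ monomialSpan s) {B : ℝ} (hB : ∀ x ∈ Icc (0 : ℝ) 1, |q.eval x| ≤ B) :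
    ∀ x ∈ Icc (0 : ℝ) 1, |(muntzStep L q).eval x| ≤ B / L := by
  suffices h : Ioc (0 : ℝ) 1 ⊆ {x | |(muntzStep L q).eval x| ≤ B / L} by
    rw [← closure_Ioc zero_ne_one]
    exact (isClosed_le (by fun_prop) continuous_const).closure_subset_iff.2 h
  rintro x ⟨hx0, hx1⟩
  have hB0 : 0 ≤ B := (abs_nonneg _).trans (hB 0 ⟨le_rfl, zero_le_one⟩)
  have hint : |∫ t in x..1, q.eval t / t ^ (L + 1)| ≤ ∫ t in x..1, B / t ^ (L + 1) := by
    refine (intervalIntegral.abs_integral_le_integral_abs hx1).trans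
      (intervalIntegral.integral_mono_on hx1 (intervalIntegrable_div_pow q.continuous L hx0).abs
        (intervalIntegrable_div_pow continuous_const L hx0) fun t ht => ?_)
    have ht0 : 0 < t ^ (L + 1) := pow_pos (hx0.trans_le ht.1) _
    rw [abs_div, abs_of_pos ht0]
    exact div_le_div_of_nonneg_right (hB t ⟨(hx0.trans_le ht.1).le, ht.2⟩) ht0.le
  have hkernel := pow_mul_integral_pow_div_pow hL0.ne hx0
  simp only [pow_zero, Nat.cast_zero, sub_zero] at hkernel
  calc |(muntzStep L q).eval x| = x ^ L * |∫ t in x..1, q.eval t / t ^ (L + 1)| := by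
        rw [eval_muntzStep hL hq hx0, abs_mul, abs_of_pos (pow_pos hx0 L)]
    _ ≤ x ^ L * ∫ t in x..1, B / t ^ (L + 1) := by gcongr
    _ = B * ((1 - x ^ L) / L) := by
        simp_rw [div_eq_mul_one_div B, intervalIntegral.integral_const_mul, mul_left_comm,
          hkernel]
    _ ≤ B / L := by
        rw [mul_div_assoc']
        gcongr
        exact mul_le_of_le_one_right hB0 (by linarith [pow_nonneg hx0.le L])

open Finset in
theorem exists_sub_X_pow_mem_monomialSpan_abs_eval_le {e : ℕ → ℕ} (he : Function.Injective e)
    {m : ℕ} (hm : ∀ j, m < e j) (k : ℕ) :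
    ∃ q : ℝ[X], q - X ^ m ∈ monomialSpan ((range k).image e) ∧
      ∀ x ∈ Icc (0 : ℝ) 1, |q.eval x| ≤ ∏ j ∈ range k, (1 - (m : ℝ) / e j) := by
  induction k with
  | zero =>
    refine ⟨X ^ m, by simp [zero_mem], fun x hx => ?_⟩
    simpa [abs_of_nonneg (pow_nonneg hx.1 m)] using pow_le_one₀ hx.1 hx.2
  | succ k ih =>
    obtain ⟨q, hqs, hqB⟩ := ih
    set s : Set ℕ := ↑((range k).image e)
    have hL0 : 0 < e k := (Nat.zero_le m).trans_lt (hm k)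
    have hmL : (0 : ℝ) < e k - m := sub_pos.2 (by exact_mod_cast hm k)
    have hL : e k ∉ insert m s := by
      simp only [s, Set.mem_insert_iff, coe_image, coe_range, Set.mem_image, Set.mem_Iio,
        he.eq_iff, not_or, not_exists, not_and]
      exact ⟨(hm k).ne', fun j hj hjk => hj.ne hjk⟩
    have hq : q ∈ monomialSpan (insert m s) := by
      simpa using add_mem (monomialSpan_mono (Set.subset_insert m s) hqs)
        (X_pow_mem_monomialSpan (Set.mem_insert m s))
    refine ⟨((e k : ℝ) - m) • muntzStep (e k) q, ?_, fun x hx => ?_⟩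
    · have hstep : ((e k : ℝ) - m) • muntzStep (e k) q - X ^ m
          = ((e k : ℝ) - m) • muntzStep (e k) (q - X ^ m) - X ^ e k := by
        rw [map_sub, muntzStep_X_pow, smul_sub, smul_smul, mul_inv_cancel₀ hmL.ne', one_smul]
        abel
      rw [hstep, range_add_one, image_insert, coe_insert]
      exact sub_mem (Submodule.smul_mem _ _ (muntzStep_mem_monomialSpan hqs))
        (X_pow_mem_monomialSpan (Set.mem_insert _ _))
    · rw [eval_smul, smul_eq_mul, abs_mul, abs_of_pos hmL, prod_range_succ]
      calc ((e k : ℝ) - m) * |(muntzStep (e k) q).eval x|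
          ≤ ((e k : ℝ) - m) * ((∏ j ∈ range k, (1 - (m : ℝ) / e j)) / e k) := by
            gcongr
            exact abs_eval_muntzStep_le hL0 hL hq hqB x hx
        _ = _ := by
            have : (e k : ℝ) ≠ 0 := by positivity
            field_simp

open Finset in
lemma tendsto_prod_one_sub_of_not_summable {a : ℕ → ℝ} (ha0 : ∀ j, 0 ≤ a j)
    (ha1 : ∀ j, a j ≤ 1) (ha : ¬ Summable a) :
    Tendsto (fun k => ∏ j ∈ range k, (1 - a j)) atTop (𝓝 0) := by
  have hexp : Tendsto (fun k => Real.exp (-∑ j ∈ range k, a j)) atTop (𝓝 0) :=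
    Real.tendsto_exp_neg_atTop_nhds_zero.comp
      ((not_summable_iff_tendsto_nat_atTop_of_nonneg ha0).1 ha)
  refine squeeze_zero (fun k => prod_nonneg fun j _ => sub_nonneg.2 (ha1 j)) (fun k => ?_) hexp
  rw [← sum_neg_distrib, Real.exp_sum]
  exact prod_le_prod (fun j _ => sub_nonneg.2 (ha1 j)) fun j _ => by
    linarith [Real.add_one_le_exp (-a j)]

section Moments

variable {E : Type*} [NormedAddCommGroup E] [NormedSpace ℝ E]

section Approximation

variable {X : Type*} [TopologicalSpace X] [MeasurableSpace X] [OpensMeasurableSpace X]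
  {μ : Measure X} {K : Set X} {φ : X → E}

lemma MeasureTheory.Integrable.continuous_smul_of_ae_mem (hφ : Integrable φ μ)
    (hK : IsCompact K) (hμK : ∀ᵐ x ∂μ, x ∈ K) {f : X → ℝ} (hf : Continuous f) :
    Integrable (fun x => f x • φ x) μ := by
  obtain ⟨C, hC⟩ := hK.exists_bound_of_continuousOn hf.continuousOn
  exact hφ.bdd_smul C hf.aestronglyMeasurable (hμK.mono hC)

lemma integral_smul_eq_zero_of_forall_approx (hφ : Integrable φ μ) (hK : IsCompact K)
    (hμK : ∀ᵐ x ∂μ, x ∈ K) {g : X → ℝ} (hg : Continuous g)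
    (h : ∀ ε > 0, ∃ f : X → ℝ, Continuous f ∧ ∫ x, f x • φ x ∂μ = 0 ∧
      ∀ x ∈ K, |g x - f x| ≤ ε) :
    ∫ x, g x • φ x ∂μ = 0 := by
  set C := ∫ x, ‖φ x‖ ∂μ
  have hbound : ∀ ε > 0, ‖∫ x, g x • φ x ∂μ‖ ≤ ε * C := by
    intro ε hε
    obtain ⟨f, hf, hf0, hgf⟩ := h ε hε
    calc ‖∫ x, g x • φ x ∂μ‖ = ‖∫ x, (g x - f x) • φ x ∂μ‖ := by
          simp_rw [sub_smul]
          rw [integral_sub (hφ.continuous_smul_of_ae_mem hK hμK hg)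
            (hφ.continuous_smul_of_ae_mem hK hμK hf), hf0, sub_zero]
      _ ≤ ∫ x, ‖(g x - f x) • φ x‖ ∂μ := norm_integral_le_integral_norm _
      _ ≤ ∫ x, ε * ‖φ x‖ ∂μ := by
          refine integral_mono_ae (hφ.continuous_smul_of_ae_mem hK hμK (hg.sub hf)).norm
            (hφ.norm.const_mul ε) ?_
          filter_upwards [hμK] with x hx
          rw [norm_smul, Real.norm_eq_abs]
          exact mul_le_mul_of_nonneg_right (hgf x hx) (norm_nonneg _)
      _ = ε * C := integral_const_mul ε _
  have hC : 0 ≤ C := integral_nonneg fun x => norm_nonneg _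
  refine norm_le_zero_iff.1 (le_of_forall_pos_le_add fun δ hδ => ?_)
  calc ‖∫ x, g x • φ x ∂μ‖ ≤ δ / (C + 1) * C := hbound _ (by positivity)
    _ ≤ 0 + δ := by
        rw [zero_add, div_mul_eq_mul_div, div_le_iff₀ (by positivity)]
        nlinarith

end Approximation

variable {μ : Measure ℝ} {φ : ℝ → E} {a b : ℝ}

lemma integral_eval_mul_smul_eq_zero (hφ : Integrable φ μ) (hμ : ∀ᵐ x ∂μ, x ∈ Icc a b)
    {s : Set ℕ} (hmom : ∀ i ∈ s, ∫ x, x ^ i • φ x ∂μ = 0) (c : ℝ) {p : ℝ[X]}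
    (hp : p ∈ monomialSpan s) : ∫ x, p.eval (c * x) • φ x ∂μ = 0 := by
  induction hp using Submodule.span_induction with
  | mem _ h =>
    obtain ⟨i, hi, rfl⟩ := h
    simp only [eval_pow, eval_X, mul_pow, mul_smul]
    rw [integral_smul, hmom i hi, smul_zero]
  | zero => simp
  | add p q _ _ hp hq =>
    have hint : ∀ r : ℝ[X], Integrable (fun x => r.eval (c * x) • φ x) μ := fun r =>
      hφ.continuous_smul_of_ae_mem isCompact_Icc hμ (by fun_prop)
    simp only [eval_add, add_smul]
    rw [integral_add (hint p) (hint q), hp, hq, add_zero]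
  | smul r p _ hp =>
    simp only [eval_smul, smul_eq_mul, mul_smul]
    rw [integral_smul, hp, smul_zero]

lemma integral_smul_eq_zero_of_integral_pow_smul_eq_zero (hφ : Integrable φ μ)
    (hμ : ∀ᵐ x ∂μ, x ∈ Icc a b) (hmom : ∀ i : ℕ, ∫ x, x ^ i • φ x ∂μ = 0) {g : ℝ → ℝ}
    (hg : Continuous g) : ∫ x, g x • φ x ∂μ = 0 := by
  refine integral_smul_eq_zero_of_forall_approx hφ isCompact_Icc hμ hg fun ε hε => ?_
  obtain ⟨p, hp⟩ := exists_polynomial_near_of_continuousOn a b g hg.continuousOn ε hε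
  refine ⟨fun x => p.eval x, p.continuous, ?_, fun x hx => ?_⟩
  · simpa using integral_eval_mul_smul_eq_zero hφ hμ (fun i _ => hmom i) 1
      (monomialSpan_univ ▸ Submodule.mem_top)
  · rw [abs_sub_comm]
    exact (hp x hx).le

open Finset in
theorem integral_pow_smul_eq_zero_of_muntz {R : ℝ} (hR : 0 < R) (hφ : Integrable φ μ)
    (hμ : ∀ᵐ x ∂μ, x ∈ Icc 0 R) {e : ℕ → ℕ} (he : Function.Injective e)
    (hmom : ∀ j, ∫ x, x ^ e j • φ x ∂μ = 0) {m : ℕ} (hm0 : m ≠ 0) (hm : ∀ j, m < e j)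
    (hdiv : ¬ Summable fun j => ((e j : ℝ))⁻¹) : ∫ x, x ^ m • φ x ∂μ = 0 := by
  have hprod : Tendsto (fun k => R ^ m * ∏ j ∈ range k, (1 - (m : ℝ) / e j)) atTop (𝓝 0) := by
    have hdiv' : ¬ Summable fun j => (m : ℝ) / e j := by
      simp_rw [div_eq_mul_inv]
      rwa [summable_mul_left_iff (Nat.cast_ne_zero.2 hm0 : (m : ℝ) ≠ 0)]
    simpa using (tendsto_prod_one_sub_of_not_summable (fun j => by positivity)
      (fun j => div_le_one_of_le₀ (by exact_mod_cast (hm j).le) (by positivity))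
      hdiv').const_mul (R ^ m)
  refine integral_smul_eq_zero_of_forall_approx hφ isCompact_Icc hμ (continuous_pow m)
    fun ε hε => ?_
  obtain ⟨k, hk⟩ := (hprod.eventually (ge_mem_nhds hε)).exists
  obtain ⟨q, hqs, hqB⟩ := exists_sub_X_pow_mem_monomialSpan_abs_eval_le he hm k
  refine ⟨fun x => ((-R ^ m) • (q - X ^ m)).eval (R⁻¹ * x), by fun_prop,
    integral_eval_mul_smul_eq_zero hφ hμ ?_ _ (Submodule.smul_mem _ _ hqs), fun x hx => ?_⟩
  · simp only [coe_image, coe_range, Set.mem_image, forall_exists_index, and_imp]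
    rintro _ j - rfl
    exact hmom j
  · have hxR : R⁻¹ * x ∈ Icc (0 : ℝ) 1 :=
      ⟨mul_nonneg (inv_nonneg.2 hR.le) hx.1, by rw [inv_mul_le_one₀ hR]; exact hx.2⟩
    have hscale :
        x ^ m - ((-R ^ m) • (q - X ^ m)).eval (R⁻¹ * x) = R ^ m * q.eval (R⁻¹ * x) := by
      have hRm : R ^ m * R⁻¹ ^ m = 1 := by rw [← mul_pow, mul_inv_cancel₀ hR.ne', one_pow]
      simp only [eval_smul, eval_sub, eval_pow, eval_X, smul_eq_mul, mul_pow]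
      linear_combination (-x ^ m) * hRm
    calc |x ^ m - ((-R ^ m) • (q - X ^ m)).eval (R⁻¹ * x)|
        = R ^ m * |q.eval (R⁻¹ * x)| := by rw [hscale, abs_mul, abs_of_pos (pow_pos hR m)]
      _ ≤ R ^ m * ∏ j ∈ range k, (1 - (m : ℝ) / e j) := by gcongr; exact hqB _ hxR
      _ ≤ ε := hk

end Moments

theorem stmt_13_general (μ : Measure ℝ)
    (R : ℝ) (hR : 0 < R) (hsupp : μ (Set.Icc 0 R)ᶜ = 0)
    (n : ℕ → ℕ) (hmono : StrictMono n) (h0 : n 0 = 0)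
    (hdiv : ∑' k : ℕ, ((n (k + 1) : ℝ≥0∞))⁻¹ = ⊤)
    (φ : ℝ → ℂ) (hφ : Integrable φ μ)
    (hmom : ∀ k : ℕ, ∫ x, (x ^ n k : ℝ) • φ x ∂μ = 0) :
    φ =ᵐ[μ] 0 := by
  have hμ : ∀ᵐ x ∂μ, x ∈ Icc 0 R := mem_ae_iff.2 hsupp
  have hpos : ∀ k, (0 : ℝ) < n (k + 1) := fun k => by exact_mod_cast h0 ▸ hmono k.succ_pos
  have hdiv' : ¬ Summable fun k => ((n (k + 1) : ℝ))⁻¹ := fun hsum => by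
    have h := ENNReal.ofReal_tsum_of_nonneg (fun k => (inv_pos.2 (hpos k)).le) hsum
    simp_rw [ENNReal.ofReal_inv_of_pos (hpos _), ENNReal.ofReal_natCast, hdiv] at h
    exact ENNReal.ofReal_ne_top h
  have hmoments : ∀ p : ℕ, ∫ x, x ^ p • φ x ∂μ = 0 := by
    intro p
    by_cases hp : p ∈ range n
    · obtain ⟨k, rfl⟩ := hp
      exact hmom k
    -- the tail `n (p + 1) < n (p + 2) < ⋯` of exponents, all larger than `p`
    refine integral_pow_smul_eq_zero_of_muntz hR hφ hμ (e := fun j => n (j + p + 1))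
      (fun a b hab => by have := hmono.injective hab; omega) (fun j => hmom _)
      (fun hp0 => hp ⟨0, h0.trans hp0.symm⟩) (fun j => ?_)
      ((summable_nat_add_iff p).not.2 hdiv')
    have := hmono.id_le (j + p + 1)
    simp only [id] at this
    omega
  exact ae_eq_zero_of_integral_contDiff_smul_eq_zero hφ.locallyIntegrable fun g hg _ =>
    integral_smul_eq_zero_of_integral_pow_smul_eq_zero hφ hμ hmoments hg.continuous

/-- (Müntz–Szász corollary.) Let `μ` be a finite Borel measure on `ℝ` supported in `[0, R]`,
and let `(n_k)` be a strictly increasing sequence of naturals with `n_0 = 0` and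
`Σ_{k≥1} 1/n_k = ∞`. If `φ ∈ L¹(μ)` has `∫ x^{n_k} φ(x) dμ(x) = 0` for all `k`, then
`φ = 0` μ-a.e. -/
theorem stmt_13 (μ : Measure ℝ) [IsFiniteMeasure μ]
    (R : ℝ) (hR : 0 < R) (hsupp : μ (Set.Icc 0 R)ᶜ = 0)
    (n : ℕ → ℕ) (hmono : StrictMono n) (h0 : n 0 = 0)
    (hdiv : ∑' k : ℕ, ((n (k + 1) : ℝ≥0∞))⁻¹ = ⊤)
    (φ : ℝ → ℂ) (hφ : Integrable φ μ)
    (hmom : ∀ k : ℕ, ∫ x, (x ^ n k : ℝ) • φ x ∂μ = 0) :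
    φ =ᵐ[μ] 0 :=
  stmt_13_general μ R hR hsupp n hmono h0 hdiv φ hφ hmom
end

section
/- Let μ be a finite Borel measure on ℂ, K a separable complex Hilbert space, and S a countable subset of the Bochner space L²(μ; K) whose linear span is dense in L²(μ; K). Fix for each h ∈ S a representative (also denoted h). Then for μ-almost every z ∈ ℂ, the linear span of { h(z) : h ∈ S } is dense in K. -/
/-! Pointwise membership of `Lp` functions in closed subspaces survives limits in `Lp`, since a
convergent sequence in `Lp` has an almost everywhere convergent subsequence. Hence every element
of the `L²`-closure of the span of the `h i` lies, at almost every point `z`, in the closure of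
the span of the values `h i z`. Applied to the constant functions with values in a countable
dense subset of `K`, this gives a single null set outside of which that closure is all of `K`. -/

open MeasureTheory Filter
open scoped ENNReal

theorem Submodule.topologicalClosure_eq_top_of_dense_subset {R M : Type*} [Semiring R]
    [AddCommMonoid M] [TopologicalSpace M] [Module R M] [ContinuousAdd M]
    [ContinuousConstSMul R M] {s : Submodule R M} {D : Set M} (hD : Dense D)
    (hDs : D ⊆ s.topologicalClosure) : s.topologicalClosure = ⊤ :=
  dense_iff_topologicalClosure_eq_top.mp (dense_closure.mp (hD.mono hDs))

namespace MeasureTheory.Lp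

variable {α E : Type*} [MeasurableSpace α] {μ : Measure α} [NormedAddCommGroup E]
  {p : ℝ≥0∞}

theorem ae_mem_closure_of_mem_closure [Fact (1 ≤ p)] {V : α → Set E} {M : Set (Lp E p μ)}
    (hM : ∀ g ∈ M, ∀ᵐ z ∂μ, g z ∈ V z) {g : Lp E p μ} (hg : g ∈ closure M) :
    ∀ᵐ z ∂μ, g z ∈ closure (V z) := by
  obtain ⟨u, huM, hu⟩ := mem_closure_iff_seq_limit.mp hg
  obtain ⟨ns, -, hlim⟩ := (tendstoInMeasure_of_tendsto_Lp hu).exists_seq_tendsto_ae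
  have hV : ∀ᵐ z ∂μ, ∀ n, u (ns n) z ∈ V z := ae_all_iff.mpr fun n => hM _ (huM (ns n))
  filter_upwards [hlim, hV] with z hz hzV
  exact mem_closure_of_tendsto hz (Eventually.of_forall hzV)

variable {𝕜 ι : Type*} [NormedField 𝕜] [NormedSpace 𝕜 E] {f : ι → α → E}

theorem ae_mem_span_of_mem_span (hf : ∀ i, MemLp (f i) p μ) {g : Lp E p μ}
    (hg : g ∈ Submodule.span 𝕜 (Set.range fun i => (hf i).toLp (f i))) :
    ∀ᵐ z ∂μ, g z ∈ Submodule.span 𝕜 (Set.range fun i => f i z) := by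
  induction hg using Submodule.span_induction with
  | mem x hx =>
    obtain ⟨i, rfl⟩ := hx
    filter_upwards [(hf i).coeFn_toLp] with z hz
    exact hz ▸ Submodule.subset_span ⟨i, rfl⟩
  | zero =>
    filter_upwards [Lp.coeFn_zero E p μ] with z hz
    exact hz ▸ Submodule.zero_mem _
  | add a b _ _ ha hb =>
    filter_upwards [Lp.coeFn_add a b, ha, hb] with z hz hza hzb
    exact hz ▸ Submodule.add_mem _ hza hzb
  | smul c a _ ha =>
    filter_upwards [Lp.coeFn_smul c a, ha] with z hz hza
    exact hz ▸ Submodule.smul_mem _ c hza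

theorem ae_mem_closure_span_of_mem_closure_span [Fact (1 ≤ p)] (hf : ∀ i, MemLp (f i) p μ)
    {g : Lp E p μ}
    (hg : g ∈ (Submodule.span 𝕜 (Set.range fun i => (hf i).toLp (f i))).topologicalClosure) :
    ∀ᵐ z ∂μ, g z ∈ (Submodule.span 𝕜 (Set.range fun i => f i z)).topologicalClosure :=
  ae_mem_closure_of_mem_closure (fun _ => ae_mem_span_of_mem_span hf) hg

theorem ae_mem_closure_span_of_dense_span [Fact (1 ≤ p)] [IsFiniteMeasure μ]
    (hf : ∀ i, MemLp (f i) p μ)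
    (hdense : (Submodule.span 𝕜 (Set.range fun i => (hf i).toLp (f i))).topologicalClosure = ⊤)
    (e : E) : ∀ᵐ z ∂μ, e ∈ (Submodule.span 𝕜 (Set.range fun i => f i z)).topologicalClosure := by
  have hconst : MemLp (fun _ => e) p μ := memLp_const e
  have hmem := ae_mem_closure_span_of_mem_closure_span hf (g := hconst.toLp)
    (hdense ▸ Submodule.mem_top)
  filter_upwards [hmem, hconst.coeFn_toLp] with z hz he
  rwa [he] at hz

end MeasureTheory.Lp

theorem stmt_14_general {K : Type*} [NormedAddCommGroup K] [InnerProductSpace ℂ K]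
    [TopologicalSpace.SeparableSpace K]
    (μ : Measure ℂ) [IsFiniteMeasure μ]
    {ι : Type*} (h : ι → ℂ → K)
    (hmem : ∀ i, MemLp (h i) 2 μ)
    (hdense :
      (Submodule.span ℂ (Set.range fun i => (hmem i).toLp (h i))).topologicalClosure = ⊤) :
    ∀ᵐ z ∂μ, (Submodule.span ℂ (Set.range fun i => h i z)).topologicalClosure = ⊤ := by
  obtain ⟨D, hDc, hD⟩ := TopologicalSpace.exists_countable_dense K
  have hDmem :
      ∀ᵐ z ∂μ, ∀ e ∈ D, e ∈ (Submodule.span ℂ (Set.range fun i => h i z)).topologicalClosure :=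
    (ae_ball_iff hDc).mpr fun e _ => Lp.ae_mem_closure_span_of_dense_span hmem hdense e
  filter_upwards [hDmem] with z hz
  exact Submodule.topologicalClosure_eq_top_of_dense_subset hD hz

/-- (Kriete's lemma.) Let `μ` be a finite Borel measure on `ℂ`, `K` a separable complex
Hilbert space and `(h i)` a countable family of functions in `L²(μ; K)` whose span is dense
in `L²(μ; K)`. Then for μ-almost every `z ∈ ℂ`, the span of `{h i z}` is dense in `K`. -/
theorem stmt_14 {K : Type*} [NormedAddCommGroup K] [InnerProductSpace ℂ K] [CompleteSpace K]
    [TopologicalSpace.SeparableSpace K]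
    (μ : Measure ℂ) [IsFiniteMeasure μ]
    {ι : Type*} [Countable ι] (h : ι → ℂ → K)
    (hmem : ∀ i, MemLp (h i) 2 μ)
    (hdense :
      (Submodule.span ℂ (Set.range fun i => (hmem i).toLp (h i))).topologicalClosure = ⊤) :
    ∀ᵐ z ∂μ, (Submodule.span ℂ (Set.range fun i => h i z)).topologicalClosure = ⊤ :=
  stmt_14_general μ h hmem hdense
end

section
/- Let Γ be a group, H a complex Hilbert space, and π : Γ → U(H) a unitary representation (a group homomorphism into the unitary operators on H). Let G ⊆ H be a nonempty set of vectors such that the family (π(γ) g), indexed by pairs (γ,g) ∈ Γ × G, is minimal. Then for every γ ∈ Γ of infinite order, the unitary operator π(γ) is not reductive: there exists a closed subspace V ⊆ H with π(γ) V ⊆ V but π(γ)* V ⊄ V. -/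
/-!
Fix `g ∈ G` and let `V` be the closed span of the forward orbit `π(γ)ⁿ g`, `n ≥ 1`. It is
`π(γ)`-invariant. If it were also `π(γ)* = π(γ)⁻¹`-invariant, it would contain
`π(γ)* π(γ) g = g`. Since `γ` has infinite order, `V` lies in the closed span of the vectors
`π(γ') g'` with `(γ', g') ≠ (1, g)`, so `g = π(1) g` would contradict minimality.
-/

open ContinuousLinearMap Submodule Set

section ForwardOrbit

variable {R M : Type*} [Semiring R] [AddCommMonoid M] [Module R M]

theorem Module.End.span_range_pow_succ_apply_mem_invtSubmodule (T : Module.End R M) (x : M) :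
    span R (range fun n : ℕ => (T ^ (n + 1)) x) ∈ T.invtSubmodule := by
  rw [Module.End.mem_invtSubmodule, span_le]
  rintro _ ⟨n, rfl⟩
  exact subset_span ⟨n + 1, congrArg (· x) (pow_succ' T (n + 1))⟩

variable [TopologicalSpace R] [TopologicalSpace M] [ContinuousSMul R M] [ContinuousAdd M]

theorem topologicalClosure_span_range_pow_succ_apply_mem_invtSubmodule (T : M →L[R] M) (x : M) :
    (span R (range fun n : ℕ => (T ^ (n + 1)) x)).topologicalClosure ∈
      Module.End.invtSubmodule (T : M →ₗ[R] M) := by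
  apply topologicalClosure_mem_invtSubmodule
  simpa only [← toLinearMap_pow, coe_coe] using
    Module.End.span_range_pow_succ_apply_mem_invtSubmodule (T : M →ₗ[R] M) x

end ForwardOrbit

theorem ContinuousLinearMap.mem_of_apply_mem_of_forall_adjoint_apply_mem {𝕜 H : Type*}
    [RCLike 𝕜] [NormedAddCommGroup H] [InnerProductSpace 𝕜 H] [CompleteSpace H]
    {a : H →L[𝕜] H} (ha : star a * a = 1) {V : Submodule 𝕜 H} {x : H} (hax : a x ∈ V)
    (hV : ∀ v ∈ V, adjoint a v ∈ V) : x ∈ V := by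
  have hstar_ax := hV _ hax
  rwa [← star_eq_adjoint, ← mul_apply_eq_comp, ha, one_apply_eq_self] at hstar_ax

theorem range_pow_succ_apply_subset_image_ne_one {H Γ : Type*} [NormedAddCommGroup H]
    [InnerProductSpace ℂ H] [CompleteSpace H] [Group Γ] (π : Γ →* unitary (H →L[ℂ] H))
    (G : Set H) {γ : Γ} (hγ : ∀ m : ℕ, 0 < m → γ ^ m ≠ 1) (g : G) :
    (range fun n : ℕ => ((π γ : H →L[ℂ] H) ^ (n + 1)) g) ⊆
      (fun p : Γ × G => (π p.1 : H →L[ℂ] H) p.2) '' {p | p ≠ (1, g)} := by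
  rintro _ ⟨n, rfl⟩
  refine ⟨(γ ^ (n + 1), g), fun h => hγ (n + 1) n.succ_pos (congrArg Prod.fst h), ?_⟩
  simp only [map_pow, SubmonoidClass.coe_pow]

/-- Let `π` be a unitary representation of a group `Γ` on a complex Hilbert space `H`, and
`G ⊆ H` a nonempty set such that the system `{π(γ) g : γ ∈ Γ, g ∈ G}` is minimal. Then for
every `γ ∈ Γ` of infinite order, `π(γ)` is not reductive: it has a closed invariant subspace
that is not invariant under `π(γ)*`. -/
theorem stmt_16 {H : Type*} [NormedAddCommGroup H] [InnerProductSpace ℂ H] [CompleteSpace H]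
    {Γ : Type*} [Group Γ] (π : Γ →* unitary (H →L[ℂ] H))
    (G : Set H) (hGne : G.Nonempty)
    (hmin : ∀ p₀ : Γ × ↥G, ((π p₀.1 : H →L[ℂ] H) (p₀.2 : H)) ∉
      (Submodule.span ℂ
        ((fun p : Γ × ↥G => (π p.1 : H →L[ℂ] H) (p.2 : H)) '' {p | p ≠ p₀})).topologicalClosure) :
    ∀ γ : Γ, (∀ m : ℕ, 0 < m → γ ^ m ≠ 1) →
      ∃ V : Submodule ℂ H, IsClosed (V : Set H) ∧
        (∀ v ∈ V, (π γ : H →L[ℂ] H) v ∈ V) ∧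
        ¬ (∀ v ∈ V, (adjoint (π γ : H →L[ℂ] H)) v ∈ V) := by
  intro γ hγ
  obtain ⟨g, hg⟩ := hGne
  set V :=
    (span ℂ (range fun n : ℕ => ((π γ : H →L[ℂ] H) ^ (n + 1)) g)).topologicalClosure
  refine ⟨V, isClosed_topologicalClosure _,
    topologicalClosure_span_range_pow_succ_apply_mem_invtSubmodule (π γ : H →L[ℂ] H) g,
    fun hadj => hmin (1, ⟨g, hg⟩) ?_⟩
  have hγg_mem : (π γ : H →L[ℂ] H) g ∈ V :=
    le_topologicalClosure _ (subset_span ⟨0, by simp⟩)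
  have hg_mem : g ∈ V :=
    mem_of_apply_mem_of_forall_adjoint_apply_mem (Unitary.coe_star_mul_self (π γ)) hγg_mem hadj
  have hV_le := topologicalClosure_mono (span_mono (R := ℂ)
    (range_pow_succ_apply_subset_image_ne_one π G hγ ⟨g, hg⟩))
  simpa using hV_le hg_mem
end

section
/- Let Γ be a group, H a nontrivial complex Hilbert space, and π : Γ → U(H) a unitary representation. Let G ⊆ H be a countable set of vectors such that the family (π(γ) g), indexed by (γ,g) ∈ Γ × G, is complete in H and, for every g ∈ G, the family (π(γ) g)_{γ∈Γ} is Bessel in H. Then for every γ ∈ Γ of infinite order, the operator π(γ) has no eigenvalues: if π(γ) v = λ v for some λ ∈ ℂ and v ∈ H, then v = 0. -/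
/-!
If `π(γ) v = λ v` with `v ≠ 0`, then `|λ| = 1`, so for every `δ ∈ Γ` and `g ∈ G` the coefficients
`|⟪v, π(γ ^ n δ) g⟫| = |⟪π(γ ^ n)⁻¹ v, π(δ) g⟫| = |⟪v, π(δ) g⟫|` do not depend on `n`. As `γ` has
infinite order, the elements `γ ^ n δ` are pairwise distinct, and the Bessel bound for the orbit of
`g` forces this constant to vanish. Hence `v` is orthogonal to a complete family, i.e. `v = 0`.
-/

open scoped InnerProductSpace ENNReal

theorem ENNReal.eq_zero_of_tsum_ne_top_of_comp_injective_eq_const {α : Type*} {f : α → ℝ≥0∞}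
    (hf : ∑' a, f a ≠ ∞) {s : ℕ → α} (hs : Function.Injective s) {c : ℝ≥0∞}
    (hc : ∀ n, f (s n) = c) : c = 0 := by
  have h := (ENNReal.tendsto_cofinite_zero_of_tsum_ne_top hf).comp hs.tendsto_cofinite
  rw [Nat.cofinite_eq_atTop, show f ∘ s = fun _ => c from funext hc] at h
  exact tendsto_const_nhds_iff.1 h

section

variable {𝕜 E : Type*} [RCLike 𝕜] [NormedAddCommGroup E] [InnerProductSpace 𝕜 E]

theorem eq_zero_of_inner_eq_zero_of_topologicalClosure_span_eq_top {s : Set E} {x : E}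
    (hs : (Submodule.span 𝕜 s).topologicalClosure = ⊤) (h : ∀ w ∈ s, ⟪x, w⟫_𝕜 = 0) : x = 0 :=
  have hker : Submodule.span 𝕜 s ≤ LinearMap.ker (innerₛₗ 𝕜 x) := Submodule.span_le.2 h
  (Submodule.dense_iff_topologicalClosure_eq_top.2 hs).eq_zero_of_inner_left 𝕜 fun _ hw => hker hw

namespace Unitary

variable [CompleteSpace E] (U : unitary (E →L[𝕜] E)) {c : 𝕜} {v : E}

theorem norm_eq_one_of_apply_eq_smul (hv : (U : E →L[𝕜] E) v = c • v) (hv0 : v ≠ 0) :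
    ‖c‖ = 1 := by
  have h := norm_map U v
  rw [hv, norm_smul] at h
  exact (mul_eq_right₀ (norm_ne_zero_iff.2 hv0)).1 h

theorem nnnorm_inner_apply_eq_of_apply_eq_smul (hv : (U : E →L[𝕜] E) v = c • v) (w : E) :
    ‖⟪v, (U : E →L[𝕜] E) w⟫_𝕜‖₊ = ‖⟪v, w⟫_𝕜‖₊ := by
  rcases eq_or_ne v 0 with rfl | hv0
  · simp
  have hc : ‖c‖₊ = 1 := NNReal.eq (norm_eq_one_of_apply_eq_smul U hv hv0)
  rw [← inner_map_map U v w, hv, inner_smul_left, nnnorm_mul, RCLike.nnnorm_conj, hc, one_mul]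

theorem nnnorm_inner_pow_apply_eq_of_apply_eq_smul (hv : (U : E →L[𝕜] E) v = c • v) (n : ℕ)
    (w : E) : ‖⟪v, ((U ^ n : unitary (E →L[𝕜] E)) : E →L[𝕜] E) w⟫_𝕜‖₊ = ‖⟪v, w⟫_𝕜‖₊ := by
  induction n with
  | zero => simp
  | succ n ih =>
    rw [pow_succ', Submonoid.coe_mul, mul_apply_eq_comp,
      nnnorm_inner_apply_eq_of_apply_eq_smul U hv, ih]

end Unitary

end

theorem stmt_17_general {H : Type*} [NormedAddCommGroup H] [InnerProductSpace ℂ H] [CompleteSpace H]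
    {Γ : Type*} [Group Γ] (π : Γ →* unitary (H →L[ℂ] H))
    (G : Set H)
    (hcomplete :
      (Submodule.span ℂ
        (Set.range fun p : Γ × ↥G => (π p.1 : H →L[ℂ] H) (p.2 : H))).topologicalClosure = ⊤)
    (hBessel : ∀ g ∈ G, ∃ β : ℝ, 0 < β ∧ ∀ f : H,
      (∑' γ : Γ, (‖⟪f, (π γ : H →L[ℂ] H) g⟫_ℂ‖₊ : ℝ≥0∞) ^ 2) ≤ ENNReal.ofReal (β * ‖f‖ ^ 2)) :
    ∀ γ : Γ, (∀ m : ℕ, 0 < m → γ ^ m ≠ 1) →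
      ∀ (lam : ℂ) (v : H), (π γ : H →L[ℂ] H) v = lam • v → v = 0 := by
  intro γ hγ lam v hv
  have hpow_inj : Function.Injective (γ ^ · : ℕ → Γ) :=
    injective_pow_iff_not_isOfFinOrder.2 fun h =>
      let ⟨m, hm, hm1⟩ := isOfFinOrder_iff_pow_eq_one.1 h; hγ m hm hm1
  refine eq_zero_of_inner_eq_zero_of_topologicalClosure_span_eq_top hcomplete ?_
  rintro _ ⟨⟨δ, g, hg⟩, rfl⟩
  obtain ⟨β, -, hB⟩ := hBessel g hg
  have hsum : ∑' σ : Γ, (‖⟪v, (π σ : H →L[ℂ] H) g⟫_ℂ‖₊ : ℝ≥0∞) ^ 2 ≠ ∞ :=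
    ne_top_of_le_ne_top ENNReal.ofReal_ne_top (hB v)
  have hconst : ∀ n : ℕ, (‖⟪v, (π (γ ^ n * δ) : H →L[ℂ] H) g⟫_ℂ‖₊ : ℝ≥0∞) ^ 2
      = (‖⟪v, (π δ : H →L[ℂ] H) g⟫_ℂ‖₊ : ℝ≥0∞) ^ 2 := fun n => by
    rw [map_mul, map_pow, Submonoid.coe_mul, mul_apply_eq_comp,
      Unitary.nnnorm_inner_pow_apply_eq_of_apply_eq_smul _ hv]
  simpa using ENNReal.eq_zero_of_tsum_ne_top_of_comp_injective_eq_const hsum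
    ((mul_left_injective δ).comp hpow_inj) hconst

/-- Let `π` be a unitary representation of a group `Γ` on a nontrivial complex Hilbert space
`H`, and `G ⊆ H` a countable set such that `{π(γ) g : γ ∈ Γ, g ∈ G}` is complete in `H` and
each orbit `(π(γ) g)_{γ∈Γ}` is Bessel. Then for every `γ ∈ Γ` of infinite order, the operator
`π(γ)` has no eigenvalues. -/
theorem stmt_17 {H : Type*} [NormedAddCommGroup H] [InnerProductSpace ℂ H] [CompleteSpace H]
    [Nontrivial H]
    {Γ : Type*} [Group Γ] (π : Γ →* unitary (H →L[ℂ] H))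
    (G : Set H) (hG : G.Countable)
    (hcomplete :
      (Submodule.span ℂ
        (Set.range fun p : Γ × ↥G => (π p.1 : H →L[ℂ] H) (p.2 : H))).topologicalClosure = ⊤)
    (hBessel : ∀ g ∈ G, ∃ β : ℝ, 0 < β ∧ ∀ f : H,
      (∑' γ : Γ, (‖⟪f, (π γ : H →L[ℂ] H) g⟫_ℂ‖₊ : ℝ≥0∞) ^ 2) ≤ ENNReal.ofReal (β * ‖f‖ ^ 2)) :
    ∀ γ : Γ, (∀ m : ℕ, 0 < m → γ ^ m ≠ 1) →
      ∀ (lam : ℂ) (v : H), (π γ : H →L[ℂ] H) v = lam • v → v = 0 :=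
  stmt_17_general π G hcomplete hBessel
end
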